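/- arXiv:math/9909138 — 8 statements merged into one kernel-verified Lean document; each statement's English description precedes it below -/
import Mathlib

section
/- Let Δ ⊆ ℂ² be open, x : Δ → ℂ⁵ holomorphic, and p ∈ Δ a point at which x(p), x_u(p), x_v(p) are linearly independent; set Π(p) = span_ℂ{x(p), x_u(p), x_v(p)}. Assume the six vectors x(p), x_u(p), x_v(p), x_uu(p), x_uv(p), x_vv(p) span ℂ⁵. Suppose there exist λ, μ ∈ ℂ with λ ≠ μ such that x_uu(p) + (λ+μ)·x_uv(p) + λμ·x_vv(p) ∈ Π(p) (conjugate double system condition at p). Then: (1) the set of points Q = α·x(p) + β·x_u(p) + γ·x_v(p) of Π(p) that are first-order focal for some nonzero direction equals span_ℂ{x(p), x_u(p)+λ·x_v(p)} ∪ span_ℂ{x(p), x_u(p)+μ·x_v(p)}, a union of two distinct 2-dimensional subspaces (two distinct lines of ℙ⁴ through the point x(p)); (2) the set of focal points for the direction (1, λ) is exactly span_ℂ{x(p), x_u(p)+μ·x_v(p)}, the set of focal points for the direction (1, μ) is exactly span_ℂ{x(p), x_u(p)+λ·x_v(p)}; and (3) for every nonzero direction not proportional to (1, λ) or (1, μ),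 the set of focal points is exactly span_ℂ{x(p)}. -/
/-!
A point `α x + β x_u + γ x_v` is focal for the direction `w` exactly when the second derivative
`d²x(w, (β, γ))` lies in `Π(p)`. Since the six vectors span `ℂ⁵` and `x_uu` is congruent to
`-(λ + μ) x_uv - λμ x_vv` modulo `Π(p)`, the classes of `x_uv` and `x_vv` are independent
modulo `Π(p)`. Writing `d²x(w, w') ≡ e₁ x_uv + e₂ x_vv`, one finds `e₂ - λ e₁ = ℓ_λ(w) ℓ_λ(w')`
and `e₂ - μ e₁ = ℓ_μ(w) ℓ_μ(w')` with `ℓ_c(w) = w₂ - c w₁`. As `λ ≠ μ`, focality means that both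
products vanish, and all three parts are read off from this pair of equations in `(β, γ)`.
-/

/-- Partial derivative with respect to the first coordinate `u` of `ℂ²`. -/
noncomputable def Du (f : ℂ × ℂ → (Fin 5 → ℂ)) : ℂ × ℂ → (Fin 5 → ℂ) :=
  fun p => fderiv ℂ f p ((1 : ℂ), (0 : ℂ))

/-- Partial derivative with respect to the second coordinate `v` of `ℂ²`. -/
noncomputable def Dv (f : ℂ × ℂ → (Fin 5 → ℂ)) : ℂ × ℂ → (Fin 5 → ℂ) :=
  fun p => fderiv ℂ f p ((0 : ℂ), (1 : ℂ))

/-- The point `α • x p + β • x_u p + γ • x_v p` of the tangent plane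
`Π(p) = span {x p, x_u p, x_v p}` is a first-order focal point for the
direction `w = (w₁, w₂)`. -/
def IsFocal (x : ℂ × ℂ → (Fin 5 → ℂ)) (p : ℂ × ℂ) (w : ℂ × ℂ) (β γ : ℂ) : Prop :=
  β • (w.1 • Du (Du x) p + w.2 • Du (Dv x) p) +
    γ • (w.1 • Du (Dv x) p + w.2 • Dv (Dv x) p)
      ∈ Submodule.span ℂ ({x p, Du x p, Dv x p} : Set (Fin 5 → ℂ))

open Submodule Module

section Conjugacy

variable {K : Type*} [Field K]

def IsConjugate (lam mu : K) (w w' : K × K) : Prop :=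
  (w.2 - lam * w.1) * (w'.2 - lam * w'.1) = 0 ∧ (w.2 - mu * w.1) * (w'.2 - mu * w'.1) = 0

variable {lam mu : K}

theorem eq_zero_of_snd_eq_mul_fst (hne : lam ≠ mu) {w : K × K}
    (hl : w.2 = lam * w.1) (hm : w.2 = mu * w.1) : w = 0 := by
  have h1 : w.1 = 0 := by
    have : (lam - mu) * w.1 = 0 := by linear_combination hl.symm.trans hm
    simpa [sub_eq_zero, hne] using this
  exact Prod.ext h1 (by simp [hl, h1])

theorem isConjugate_swap {w w' : K × K} : IsConjugate mu lam w w' ↔ IsConjugate lam mu w w' :=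
  and_comm

theorem isConjugate_one_left_iff (hne : lam ≠ mu) {w' : K × K} :
    IsConjugate lam mu (1, lam) w' ↔ w'.2 = mu * w'.1 := by
  simp [IsConjugate, sub_eq_zero, hne]

theorem isConjugate_iff_eq_zero (hne : lam ≠ mu) {w w' : K × K}
    (hl : w.2 ≠ lam * w.1) (hm : w.2 ≠ mu * w.1) : IsConjugate lam mu w w' ↔ w' = 0 := by
  rw [← sub_ne_zero] at hl hm
  simp only [IsConjugate, mul_eq_zero, hl, hm, false_or, sub_eq_zero]
  constructor
  · exact fun ⟨h, h'⟩ => eq_zero_of_snd_eq_mul_fst hne h h'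
  · rintro rfl
    simp

theorem exists_isConjugate_iff (hne : lam ≠ mu) {w' : K × K} :
    (∃ w ≠ 0, IsConjugate lam mu w w') ↔ w'.2 = lam * w'.1 ∨ w'.2 = mu * w'.1 := by
  constructor
  · rintro ⟨w, hw, hl, hm⟩
    by_contra! ⟨h, h'⟩
    rw [← sub_ne_zero] at h h'
    simp only [mul_eq_zero, h, h', or_false, sub_eq_zero] at hl hm
    exact hw (eq_zero_of_snd_eq_mul_fst hne hl hm)
  · rintro (h | h)
    · exact ⟨(1, mu), by simp, isConjugate_swap.1 ((isConjugate_one_left_iff hne.symm).2 h)⟩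
    · exact ⟨(1, lam), by simp, (isConjugate_one_left_iff hne).2 h⟩

theorem forall_ne_smul_one_iff {w : K × K} (c : K) :
    (∀ t : K, w ≠ t • (1, c)) ↔ w.2 ≠ c * w.1 := by
  refine not_iff_not.1 ?_
  push Not
  constructor
  · rintro ⟨t, rfl⟩
    simp [mul_comm]
  · intro h
    exact ⟨w.1, Prod.ext (by simp) (by simp [h, mul_comm])⟩

end Conjugacy

section Plane

variable {K V : Type*} [Field K] [AddCommGroup V] [Module K V]

theorem linearIndependent_of_span_eq_top {A B C S T U : V} {a b : K}
    (hV : finrank K V = 5) (hspan : span K {A, B, C, S, T, U} = ⊤)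
    (hconj : S + a • T + b • U ∈ span K {A, B, C}) :
    LinearIndependent K ![A, B, C, T, U] := by
  have hS : S ∈ span K {A, B, C, T, U} := by
    have hle : span K {A, B, C} ≤ span K {A, B, C, T, U} := span_mono (by grind)
    have hT : T ∈ span K {A, B, C, T, U} := subset_span (by simp)
    have hU : U ∈ span K {A, B, C, T, U} := subset_span (by simp)
    rw [show S = S + a • T + b • U - a • T - b • U by abel]
    exact sub_mem (sub_mem (hle hconj) (smul_mem _ a hT)) (smul_mem _ b hU)
  refine linearIndependent_of_top_le_span_of_card_eq_finrank ?_ (by simp [hV])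
  have : ({A, B, C, S, T, U} : Set V) = insert S {A, B, C, T, U} := by grind
  rw [← hspan, this, span_insert_eq_span hS]
  simp only [Matrix.range_cons, Matrix.range_empty, Set.union_empty, Set.singleton_union, le_refl]

theorem eq_zero_of_smul_add_smul_mem_span {A B C T U : V}
    (hI : LinearIndependent K ![A, B, C, T, U]) {b c : K}
    (h : b • T + c • U ∈ span K {A, B, C}) : b = 0 ∧ c = 0 := by
  obtain ⟨r, s, t, hrst⟩ : ∃ r s t : K, b • T + c • U = r • A + (s • B + t • C) := by
    simpa [mem_span_insert, mem_span_singleton] using h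
  have := Fintype.linearIndependent_iff.1 hI ![r, s, t, -b, -c]
    (by simp [Fin.sum_univ_five]; linear_combination (norm := module) -hrst)
  exact ⟨by simpa using this 3, by simpa using this 4⟩

theorem linearIndependent_pair_add_smul {A B C : V} (hI : LinearIndependent K ![A, B, C]) (c : K) :
    LinearIndependent K ![A, B + c • C] := by
  refine LinearIndependent.pair_iff.2 fun s t hst => ?_
  have := Fintype.linearIndependent_iff.1 hI ![s, t, t * c]
    (by simp [Fin.sum_univ_three]; linear_combination (norm := module) hst)
  exact ⟨by simpa using this 0, by simpa using this 1⟩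

theorem finrank_span_pair_add_smul {A B C : V} (hI : LinearIndependent K ![A, B, C]) (c : K) :
    finrank K (span K {A, B + c • C}) = 2 := by
  rw [← Matrix.range_cons_cons_empty A (B + c • C) ![],
    finrank_span_eq_card (linearIndependent_pair_add_smul hI c), Fintype.card_fin]

theorem span_pair_add_smul_ne {A B C : V} (hI : LinearIndependent K ![A, B, C]) {c d : K}
    (hcd : c ≠ d) : span K {A, B + c • C} ≠ span K {A, B + d • C} := by
  intro h
  have hmem : B + c • C ∈ span K {A, B + d • C} := h ▸ subset_span (by simp)
  obtain ⟨s, t, hst⟩ := mem_span_pair.1 hmem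
  have := Fintype.linearIndependent_iff.1 hI ![s, t - 1, t * d - c]
    (by simp [Fin.sum_univ_three]; linear_combination (norm := module) hst)
  have ht : t = 1 := by simpa [sub_eq_zero] using this 1
  exact hcd (by simpa [ht, sub_eq_zero, eq_comm] using this 2)

theorem mem_span_pair_add_smul_iff {A B C Q : V} {c : K} :
    Q ∈ span K {A, B + c • C} ↔ ∃ α β γ : K, Q = α • A + β • B + γ • C ∧ γ = c * β := by
  rw [mem_span_pair]
  constructor
  · rintro ⟨s, t, rfl⟩
    exact ⟨s, t, c * t, by module, rfl⟩
  · rintro ⟨α, β, γ, rfl, rfl⟩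
    exact ⟨α, β, by module⟩

/-- `d²x(w, w')` when `S, T, U` are `x_uu, x_uv, x_vv`. -/
def hessianForm (S T U : V) (w w' : K × K) : V :=
  (w.1 * w'.1) • S + (w.1 * w'.2 + w.2 * w'.1) • T + (w.2 * w'.2) • U

theorem hessianForm_mem_iff {P : Submodule K V} {S T U : V} {lam mu : K}
    (hTU : ∀ b c : K, b • T + c • U ∈ P → b = 0 ∧ c = 0)
    (hconj : S + (lam + mu) • T + (lam * mu) • U ∈ P) (hne : lam ≠ mu) (w w' : K × K) :
    hessianForm S T U w w' ∈ P ↔ IsConjugate lam mu w w' := by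
  obtain ⟨e₁, he₁⟩ : ∃ e, e = w.1 * w'.2 + w.2 * w'.1 - (lam + mu) * (w.1 * w'.1) := ⟨_, rfl⟩
  obtain ⟨e₂, he₂⟩ : ∃ e, e = w.2 * w'.2 - lam * mu * (w.1 * w'.1) := ⟨_, rfl⟩
  have hdecomp : hessianForm S T U w w' =
      (w.1 * w'.1) • (S + (lam + mu) • T + (lam * mu) • U) + (e₁ • T + e₂ • U) := by
    rw [hessianForm, he₁, he₂]; module
  rw [hdecomp, P.add_mem_iff_right (P.smul_mem _ hconj)]
  constructor
  · intro h
    obtain ⟨h₁, h₂⟩ := hTU _ _ h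
    exact ⟨by linear_combination h₂ - lam * h₁ - he₂ + lam * he₁,
      by linear_combination h₂ - mu * h₁ - he₂ + mu * he₁⟩
  · rintro ⟨hl, hm⟩
    have h₁ : e₁ = 0 := by
      have : (mu - lam) * e₁ = 0 := by linear_combination hl - hm + (mu - lam) * he₁
      simpa [sub_eq_zero, hne.symm] using this
    have h₂ : e₂ = 0 := by linear_combination hl + lam * h₁ + he₂ - lam * he₁
    simp [h₁, h₂]

end Plane

theorem isFocal_iff_hessianForm_mem (x : ℂ × ℂ → (Fin 5 → ℂ)) (p w : ℂ × ℂ) (β γ : ℂ) :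
    IsFocal x p w β γ ↔ hessianForm (Du (Du x) p) (Du (Dv x) p) (Dv (Dv x) p) w (β, γ) ∈
      span ℂ ({x p, Du x p, Dv x p} : Set (Fin 5 → ℂ)) := by
  rw [IsFocal, hessianForm]
  congr! 1
  module

theorem conjugate_double_system_focal_conic_general
    (x : ℂ × ℂ → (Fin 5 → ℂ))
    (p : ℂ × ℂ)
    (hindep : LinearIndependent ℂ ![x p, Du x p, Dv x p])
    (hspan : Submodule.span ℂ
      ({x p, Du x p, Dv x p, Du (Du x) p, Du (Dv x) p, Dv (Dv x) p} : Set (Fin 5 → ℂ)) = ⊤)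
    (lam mu : ℂ) (hne : lam ≠ mu)
    (hconj : Du (Du x) p + (lam + mu) • Du (Dv x) p + (lam * mu) • Dv (Dv x) p
      ∈ Submodule.span ℂ ({x p, Du x p, Dv x p} : Set (Fin 5 → ℂ))) :
    -- (1) the focal locus is the union of two distinct lines through x p
    ({Q : Fin 5 → ℂ | ∃ α β γ : ℂ,
        Q = α • x p + β • Du x p + γ • Dv x p ∧
        ∃ w : ℂ × ℂ, w ≠ 0 ∧ IsFocal x p w β γ}
      = (Submodule.span ℂ ({x p, Du x p + lam • Dv x p} : Set (Fin 5 → ℂ)) : Set (Fin 5 → ℂ))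
        ∪ (Submodule.span ℂ ({x p, Du x p + mu • Dv x p} : Set (Fin 5 → ℂ)) : Set (Fin 5 → ℂ))) ∧
    Submodule.span ℂ ({x p, Du x p + lam • Dv x p} : Set (Fin 5 → ℂ))
      ≠ Submodule.span ℂ ({x p, Du x p + mu • Dv x p} : Set (Fin 5 → ℂ)) ∧
    Module.finrank ℂ
      (Submodule.span ℂ ({x p, Du x p + lam • Dv x p} : Set (Fin 5 → ℂ))) = 2 ∧
    Module.finrank ℂ
      (Submodule.span ℂ ({x p, Du x p + mu • Dv x p} : Set (Fin 5 → ℂ))) = 2 ∧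
    -- (2) the focal points for the directions (1, lam) and (1, mu)
    ({Q : Fin 5 → ℂ | ∃ α β γ : ℂ,
        Q = α • x p + β • Du x p + γ • Dv x p ∧ IsFocal x p ((1 : ℂ), lam) β γ}
      = (Submodule.span ℂ ({x p, Du x p + mu • Dv x p} : Set (Fin 5 → ℂ)) : Set (Fin 5 → ℂ))) ∧
    ({Q : Fin 5 → ℂ | ∃ α β γ : ℂ,
        Q = α • x p + β • Du x p + γ • Dv x p ∧ IsFocal x p ((1 : ℂ), mu) β γ}
      = (Submodule.span ℂ ({x p, Du x p + lam • Dv x p} : Set (Fin 5 → ℂ)) : Set (Fin 5 → ℂ))) ∧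
    -- (3) the focal points for any other direction
    ∀ w : ℂ × ℂ, w ≠ 0 → (∀ c : ℂ, w ≠ c • ((1 : ℂ), lam)) →
      (∀ c : ℂ, w ≠ c • ((1 : ℂ), mu)) →
      {Q : Fin 5 → ℂ | ∃ α β γ : ℂ,
          Q = α • x p + β • Du x p + γ • Dv x p ∧ IsFocal x p w β γ}
        = (Submodule.span ℂ ({x p} : Set (Fin 5 → ℂ)) : Set (Fin 5 → ℂ)) := by
  have hI := linearIndependent_of_span_eq_top (by simp) hspan hconj
  have hfocal (w : ℂ × ℂ) (β γ : ℂ) : IsFocal x p w β γ ↔ IsConjugate lam mu w (β, γ) :=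
    (isFocal_iff_hessianForm_mem x p w β γ).trans <|
      hessianForm_mem_iff (fun _ _ => eq_zero_of_smul_add_smul_mem_span hI) hconj hne w (β, γ)
  simp only [hfocal]
  refine ⟨?_, span_pair_add_smul_ne hindep hne, finrank_span_pair_add_smul hindep lam,
    finrank_span_pair_add_smul hindep mu, ?_, ?_, fun w _ hwl hwm => ?_⟩
  · ext Q
    simp only [exists_isConjugate_iff hne, Set.mem_ofPred_eq, Set.mem_union, SetLike.mem_coe,
      mem_span_pair_add_smul_iff, and_or_left, exists_or]
  · ext Q
    simp only [isConjugate_one_left_iff hne, Set.mem_ofPred_eq, SetLike.mem_coe,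
      mem_span_pair_add_smul_iff]
  · ext Q
    simp only [← isConjugate_swap (lam := lam), isConjugate_one_left_iff hne.symm,
      Set.mem_ofPred_eq, SetLike.mem_coe, mem_span_pair_add_smul_iff]
  · ext Q
    rw [forall_ne_smul_one_iff] at hwl hwm
    simp [isConjugate_iff_eq_zero hne hwl hwm, mem_span_singleton, eq_comm (a := Q)]

/-- β₁-congruences: a conjugate double system condition at `p` makes the focal conic
a pair of two distinct lines through `x p`, the two conjugate directions being the
developable ones, and all other directions having `x p` as their only focal point. -/
theorem conjugate_double_system_focal_conic
    (Δ : Set (ℂ × ℂ)) (hΔ : IsOpen Δ)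
    (x : ℂ × ℂ → (Fin 5 → ℂ)) (hx : DifferentiableOn ℂ x Δ)
    (p : ℂ × ℂ) (hp : p ∈ Δ)
    (hindep : LinearIndependent ℂ ![x p, Du x p, Dv x p])
    (hspan : Submodule.span ℂ
      ({x p, Du x p, Dv x p, Du (Du x) p, Du (Dv x) p, Dv (Dv x) p} : Set (Fin 5 → ℂ)) = ⊤)
    (lam mu : ℂ) (hne : lam ≠ mu)
    (hconj : Du (Du x) p + (lam + mu) • Du (Dv x) p + (lam * mu) • Dv (Dv x) p
      ∈ Submodule.span ℂ ({x p, Du x p, Dv x p} : Set (Fin 5 → ℂ))) :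
    -- (1) the focal locus is the union of two distinct lines through x p
    ({Q : Fin 5 → ℂ | ∃ α β γ : ℂ,
        Q = α • x p + β • Du x p + γ • Dv x p ∧
        ∃ w : ℂ × ℂ, w ≠ 0 ∧ IsFocal x p w β γ}
      = (Submodule.span ℂ ({x p, Du x p + lam • Dv x p} : Set (Fin 5 → ℂ)) : Set (Fin 5 → ℂ))
        ∪ (Submodule.span ℂ ({x p, Du x p + mu • Dv x p} : Set (Fin 5 → ℂ)) : Set (Fin 5 → ℂ))) ∧
    Submodule.span ℂ ({x p, Du x p + lam • Dv x p} : Set (Fin 5 → ℂ))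
      ≠ Submodule.span ℂ ({x p, Du x p + mu • Dv x p} : Set (Fin 5 → ℂ)) ∧
    Module.finrank ℂ
      (Submodule.span ℂ ({x p, Du x p + lam • Dv x p} : Set (Fin 5 → ℂ))) = 2 ∧
    Module.finrank ℂ
      (Submodule.span ℂ ({x p, Du x p + mu • Dv x p} : Set (Fin 5 → ℂ))) = 2 ∧
    -- (2) the focal points for the directions (1, lam) and (1, mu)
    ({Q : Fin 5 → ℂ | ∃ α β γ : ℂ,
        Q = α • x p + β • Du x p + γ • Dv x p ∧ IsFocal x p ((1 : ℂ), lam) β γ}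
      = (Submodule.span ℂ ({x p, Du x p + mu • Dv x p} : Set (Fin 5 → ℂ)) : Set (Fin 5 → ℂ))) ∧
    ({Q : Fin 5 → ℂ | ∃ α β γ : ℂ,
        Q = α • x p + β • Du x p + γ • Dv x p ∧ IsFocal x p ((1 : ℂ), mu) β γ}
      = (Submodule.span ℂ ({x p, Du x p + lam • Dv x p} : Set (Fin 5 → ℂ)) : Set (Fin 5 → ℂ))) ∧
    -- (3) the focal points for any other direction
    ∀ w : ℂ × ℂ, w ≠ 0 → (∀ c : ℂ, w ≠ c • ((1 : ℂ), lam)) →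
      (∀ c : ℂ, w ≠ c • ((1 : ℂ), mu)) →
      {Q : Fin 5 → ℂ | ∃ α β γ : ℂ,
          Q = α • x p + β • Du x p + γ • Dv x p ∧ IsFocal x p w β γ}
        = (Submodule.span ℂ ({x p} : Set (Fin 5 → ℂ)) : Set (Fin 5 → ℂ)) :=
  conjugate_double_system_focal_conic_general x p hindep hspan lam mu hne hconj
end

section
/- Let Δ ⊆ ℂ² be open, x : Δ → ℂ⁵ holomorphic, and p ∈ Δ a point at which x(p), x_u(p), x_v(p) are linearly independent; set Π(p) = span_ℂ{x(p), x_u(p), x_v(p)}. Assume the six vectors x(p), x_u(p), x_v(p), x_uu(p), x_uv(p), x_vv(p) span ℂ⁵. Suppose there exists λ ∈ ℂ such that x_uu(p) + 2λ·x_uv(p) + λ²·x_vv(p) ∈ Π(p) (asymptotic condition at p). Then: (1) there is no pair λ' ≠ μ' in ℂ with x_uu(p) + (λ'+μ')·x_uv(p) + λ'μ'·x_vv(p) ∈ Π(p); (2) the set of points Q = α·x(p) + β·x_u(p) + γ·x_v(p) of Π(p) that are first-order focal for some nonzero direction equals the single 2-dimensional subspace span_ℂ{x(p), x_u(p)+λ·x_v(p)}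 (a single line of ℙ⁴, the focal conic being a double line); (3) the set of focal points for the direction (1, λ) is exactly span_ℂ{x(p), x_u(p)+λ·x_v(p)}, and for every nonzero direction not proportional to (1, λ) it is exactly span_ℂ{x(p)}. -/
section FocalSystem

variable {K : Type*} [CommRing K]

/-- Writing `A ≡ -2λB - λ²C` modulo the tangent plane, the focal combination
`β (w₁A + w₂B) + γ (w₁B + w₂C)` has these `B`- and `C`-coefficients. -/
def FocalSystem (lam : K) (w : K × K) (β γ : K) : Prop :=
  β * w.2 - 2 * lam * β * w.1 + γ * w.1 = 0 ∧ γ * w.2 - lam ^ 2 * β * w.1 = 0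

theorem focalSystem_smul_iff [IsDomain K] {lam c β γ : K} (hc : c ≠ 0) :
    FocalSystem lam (c • ((1 : K), lam)) β γ ↔ γ = lam * β := by
  simp only [FocalSystem, Prod.smul_mk, smul_eq_mul]
  constructor
  · rintro ⟨h, -⟩
    have : c * (γ - lam * β) = 0 := by linear_combination h
    exact sub_eq_zero.mp ((mul_eq_zero.mp this).resolve_left hc)
  · rintro rfl
    constructor <;> ring

theorem focalSystem_one_iff [IsDomain K] {lam β γ : K} :
    FocalSystem lam ((1 : K), lam) β γ ↔ γ = lam * β := by
  simpa using focalSystem_smul_iff (lam := lam) (β := β) (γ := γ) one_ne_zero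

theorem focalSystem_iff_of_forall_ne_smul [IsDomain K] {lam β γ : K} {w : K × K} (hw : w ≠ 0)
    (hline : ∀ c : K, w ≠ c • ((1 : K), lam)) :
    FocalSystem lam w β γ ↔ β = 0 ∧ γ = 0 := by
  have hdisc : w.2 - lam * w.1 ≠ 0 := fun h ↦
    hline w.1 (Prod.ext (by simp) (by simpa [mul_comm] using sub_eq_zero.mp h))
  constructor
  · rintro ⟨h₁, h₂⟩
    have hβ : β * (w.2 - lam * w.1) ^ 2 = 0 := by linear_combination w.2 * h₁ - w.1 * h₂
    obtain rfl : β = 0 := (mul_eq_zero.mp hβ).resolve_right (pow_ne_zero 2 hdisc)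
    refine ⟨rfl, by_contra fun hγ ↦ hw (Prod.ext ?_ ?_)⟩
    · exact (mul_eq_zero.mp (by linear_combination h₁ : γ * w.1 = 0)).resolve_left hγ
    · exact (mul_eq_zero.mp (by linear_combination h₂ : γ * w.2 = 0)).resolve_left hγ
  · rintro ⟨rfl, rfl⟩
    constructor <;> ring

theorem exists_focalSystem_iff [IsDomain K] {lam β γ : K} :
    (∃ w ≠ 0, FocalSystem lam w β γ) ↔ γ = lam * β := by
  constructor
  · rintro ⟨w, hw, h⟩
    by_cases hline : ∃ c : K, w = c • ((1 : K), lam)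
    · obtain ⟨c, rfl⟩ := hline
      exact (focalSystem_smul_iff (left_ne_zero_of_smul hw)).mp h
    · push Not at hline
      obtain ⟨rfl, rfl⟩ := (focalSystem_iff_of_forall_ne_smul hw hline).mp h
      ring
  · exact fun h ↦ ⟨((1 : K), lam), by simp, focalSystem_one_iff.mpr h⟩

end FocalSystem

section TangentPlane

open Submodule Module

variable {K E : Type*}

theorem span_quintuple_eq_top [CommRing K] [AddCommGroup E] [Module K E] {X U V A B C : E}
    {lam : K} (hspan : span K ({X, U, V, A, B, C} : Set E) = ⊤)
    (hasym : A + (2 * lam) • B + (lam ^ 2) • C ∈ span K ({X, U, V} : Set E)) :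
    span K ({X, U, V, B, C} : Set E) = ⊤ := by
  have hA : A ∈ span K ({X, U, V, B, C} : Set E) := by
    have hmono : span K ({X, U, V} : Set E) ≤ span K {X, U, V, B, C} := 
      span_mono (by simp [Set.insert_subset_iff])
    rw [show A = (A + (2 * lam) • B + (lam ^ 2) • C) - (2 * lam) • B - (lam ^ 2) • C by abel]
    exact sub_mem (sub_mem (hmono hasym) (smul_mem _ _ (subset_span (by simp))))
      (smul_mem _ _ (subset_span (by simp)))
  rw [← hspan, ← span_insert_eq_span hA]
  simp only [Set.insert_comm A]

theorem linearIndependent_of_span_eq_top_of_finrank_eq_five [Field K] [AddCommGroup E]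
    [Module K E] (hE : finrank K E = 5) {X U V B C : E}
    (hspan : span K ({X, U, V, B, C} : Set E) = ⊤) :
    LinearIndependent K ![X, U, V, B, C] :=
  linearIndependent_of_top_le_span_of_card_eq_finrank
    (by simp only [Matrix.range_cons, Matrix.range_empty, Set.union_empty, Set.singleton_union,
      hspan, le_refl]) (by simp [hE])

theorem smul_add_smul_mem_span_triple_iff [CommRing K] [AddCommGroup E] [Module K E]
    {X U V B C : E} (hind : LinearIndependent K ![X, U, V, B, C]) {b c : K} :
    b • B + c • C ∈ span K ({X, U, V} : Set E) ↔ b = 0 ∧ c = 0 := by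
  refine ⟨fun h ↦ ?_, by rintro ⟨rfl, rfl⟩; simp⟩
  obtain ⟨a, u, v, hQ⟩ := mem_span_triple.mp h
  have hzero : ∑ i, ![a, u, v, -b, -c] i • ![X, U, V, B, C] i = 0 := by
    simp only [Fin.sum_univ_five, Matrix.cons_val]
    linear_combination (norm := module) hQ
  have := Fintype.linearIndependent_iff.mp hind _ hzero
  exact ⟨neg_eq_zero.mp (this 3), neg_eq_zero.mp (this 4)⟩

theorem focal_mem_span_triple_iff [CommRing K] [AddCommGroup E] [Module K E]
    {X U V A B C : E} {lam : K} (hind : LinearIndependent K ![X, U, V, B, C])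
    (hasym : A + (2 * lam) • B + (lam ^ 2) • C ∈ span K ({X, U, V} : Set E))
    {w : K × K} {β γ : K} :
    β • (w.1 • A + w.2 • B) + γ • (w.1 • B + w.2 • C) ∈ span K ({X, U, V} : Set E) ↔
      FocalSystem lam w β γ := by
  rw [show β • (w.1 • A + w.2 • B) + γ • (w.1 • B + w.2 • C) =
      (β * w.1) • (A + (2 * lam) • B + (lam ^ 2) • C) +
        ((β * w.2 - 2 * lam * β * w.1 + γ * w.1) • B + (γ * w.2 - lam ^ 2 * β * w.1) • C)
      by module, add_mem_cancel_left (smul_mem _ _ hasym)]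
  exact smul_add_smul_mem_span_triple_iff hind

theorem eq_of_conjugate_mem_span_triple [CommRing K] [IsDomain K] [AddCommGroup E] [Module K E]
    {X U V A B C : E} {lam : K} (hind : LinearIndependent K ![X, U, V, B, C])
    (hasym : A + (2 * lam) • B + (lam ^ 2) • C ∈ span K ({X, U, V} : Set E)) {l m : K}
    (hconj : A + (l + m) • B + (l * m) • C ∈ span K ({X, U, V} : Set E)) : l = m := by
  have hdiff := sub_mem hconj hasym
  rw [show A + (l + m) • B + (l * m) • C - (A + (2 * lam) • B + (lam ^ 2) • C) =
      (l + m - 2 * lam) • B + (l * m - lam ^ 2) • C by module,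
    smul_add_smul_mem_span_triple_iff hind] at hdiff
  obtain ⟨hsum, hprod⟩ := hdiff
  have hsq : (l - m) ^ 2 = 0 := by linear_combination (l + m + 2 * lam) * hsum - 4 * hprod
  exact sub_eq_zero.mp (pow_eq_zero_iff two_ne_zero |>.mp hsq)

theorem setOf_combination_eq_span_pair [CommRing K] [AddCommGroup E] [Module K E]
    (X U V : E) (lam : K) :
    {Q | ∃ α β γ : K, Q = α • X + β • U + γ • V ∧ γ = lam * β} =
      (span K ({X, U + lam • V} : Set E) : Set E) := by
  ext Q
  simp only [Set.mem_ofPred_eq, SetLike.mem_coe, mem_span_pair]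
  constructor
  · rintro ⟨α, β, _, rfl, rfl⟩
    exact ⟨α, β, by module⟩
  · rintro ⟨α, β, rfl⟩
    exact ⟨α, β, lam * β, by module, rfl⟩

theorem setOf_combination_eq_span_singleton [CommRing K] [AddCommGroup E] [Module K E]
    (X U V : E) :
    {Q | ∃ α β γ : K, Q = α • X + β • U + γ • V ∧ β = 0 ∧ γ = 0} =
      (span K ({X} : Set E) : Set E) := by
  ext Q
  simp only [Set.mem_ofPred_eq, SetLike.mem_coe, mem_span_singleton]
  constructor
  · rintro ⟨α, _, _, rfl, rfl, rfl⟩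
    exact ⟨α, by module⟩
  · rintro ⟨α, rfl⟩
    exact ⟨α, 0, 0, by module, rfl, rfl⟩

theorem finrank_span_pair_add_smul_s2 [Field K] [AddCommGroup E] [Module K E] {X U V : E}
    (hind : LinearIndependent K ![X, U, V]) (lam : K) :
    finrank K (span K ({X, U + lam • V} : Set E)) = 2 := by
  have hpair : LinearIndependent K ![X, U + lam • V] := by
    refine LinearIndependent.pair_iff.mpr fun s t hst ↦ ?_
    have hzero : ∑ i, ![s, t, t * lam] i • ![X, U, V] i = 0 := by
      simp only [Fin.sum_univ_three, Matrix.cons_val]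
      linear_combination (norm := module) hst
    have := Fintype.linearIndependent_iff.mp hind _ hzero
    exact ⟨this 0, this 1⟩
  rw [← Matrix.range_cons_cons_empty X (U + lam • V) ![]]
  exact finrank_span_eq_card hpair

end TangentPlane

theorem asymptotic_focal_double_line_general
    (x : ℂ × ℂ → (Fin 5 → ℂ))
    (p : ℂ × ℂ)
    (hindep : LinearIndependent ℂ ![x p, Du x p, Dv x p])
    (hspan : Submodule.span ℂ
      ({x p, Du x p, Dv x p, Du (Du x) p, Du (Dv x) p, Dv (Dv x) p} : Set (Fin 5 → ℂ)) = ⊤)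
    (lam : ℂ)
    (hasym : Du (Du x) p + (2 * lam) • Du (Dv x) p + (lam ^ 2) • Dv (Dv x) p
      ∈ Submodule.span ℂ ({x p, Du x p, Dv x p} : Set (Fin 5 → ℂ))) :
    -- (1) no conjugate double system condition holds at p
    (¬ ∃ lam' mu' : ℂ, lam' ≠ mu' ∧
        Du (Du x) p + (lam' + mu') • Du (Dv x) p + (lam' * mu') • Dv (Dv x) p
          ∈ Submodule.span ℂ ({x p, Du x p, Dv x p} : Set (Fin 5 → ℂ))) ∧
    -- (2) the focal locus is a single line through x p (a double line)
    ({Q : Fin 5 → ℂ | ∃ α β γ : ℂ,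
        Q = α • x p + β • Du x p + γ • Dv x p ∧
        ∃ w : ℂ × ℂ, w ≠ 0 ∧ IsFocal x p w β γ}
      = (Submodule.span ℂ ({x p, Du x p + lam • Dv x p} : Set (Fin 5 → ℂ)) :
          Set (Fin 5 → ℂ))) ∧
    Module.finrank ℂ
      (Submodule.span ℂ ({x p, Du x p + lam • Dv x p} : Set (Fin 5 → ℂ))) = 2 ∧
    -- (3) the focal points for the direction (1, lam) and for all other directions
    ({Q : Fin 5 → ℂ | ∃ α β γ : ℂ,
        Q = α • x p + β • Du x p + γ • Dv x p ∧ IsFocal x p ((1 : ℂ), lam) β γ}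
      = (Submodule.span ℂ ({x p, Du x p + lam • Dv x p} : Set (Fin 5 → ℂ)) :
          Set (Fin 5 → ℂ))) ∧
    ∀ w : ℂ × ℂ, w ≠ 0 → (∀ c : ℂ, w ≠ c • ((1 : ℂ), lam)) →
      {Q : Fin 5 → ℂ | ∃ α β γ : ℂ,
          Q = α • x p + β • Du x p + γ • Dv x p ∧ IsFocal x p w β γ}
        = (Submodule.span ℂ ({x p} : Set (Fin 5 → ℂ)) : Set (Fin 5 → ℂ)) := by
  have hind : LinearIndependent ℂ ![x p, Du x p, Dv x p, Du (Dv x) p, Dv (Dv x) p] :=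
    linearIndependent_of_span_eq_top_of_finrank_eq_five (by simp)
      (span_quintuple_eq_top hspan hasym)
  have hfocal (w : ℂ × ℂ) (β γ : ℂ) : IsFocal x p w β γ ↔ FocalSystem lam w β γ :=
    focal_mem_span_triple_iff hind hasym
  refine ⟨fun ⟨l, m, hne, hconj⟩ ↦ hne (eq_of_conjugate_mem_span_triple hind hasym hconj),
    ?_, finrank_span_pair_add_smul_s2 hindep lam, ?_, fun w hw hline ↦ ?_⟩
  · simp_rw [hfocal, exists_focalSystem_iff]
    exact setOf_combination_eq_span_pair _ _ _ lam
  · simp_rw [hfocal, focalSystem_one_iff]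
    exact setOf_combination_eq_span_pair _ _ _ lam
  · simp_rw [hfocal, focalSystem_iff_of_forall_ne_smul hw hline]
    exact setOf_combination_eq_span_singleton _ _ _

/-- γ₁-congruences: an asymptotic condition at `p` (with no conjugate double system)
makes the focal conic a double line through `x p`, with one double developable
direction, all other directions having `x p` as their only focal point. -/
theorem asymptotic_focal_double_line
    (Δ : Set (ℂ × ℂ)) (hΔ : IsOpen Δ)
    (x : ℂ × ℂ → (Fin 5 → ℂ)) (hx : DifferentiableOn ℂ x Δ)
    (p : ℂ × ℂ) (hp : p ∈ Δ)
    (hindep : LinearIndependent ℂ ![x p, Du x p, Dv x p])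
    (hspan : Submodule.span ℂ
      ({x p, Du x p, Dv x p, Du (Du x) p, Du (Dv x) p, Dv (Dv x) p} : Set (Fin 5 → ℂ)) = ⊤)
    (lam : ℂ)
    (hasym : Du (Du x) p + (2 * lam) • Du (Dv x) p + (lam ^ 2) • Dv (Dv x) p
      ∈ Submodule.span ℂ ({x p, Du x p, Dv x p} : Set (Fin 5 → ℂ))) :
    -- (1) no conjugate double system condition holds at p
    (¬ ∃ lam' mu' : ℂ, lam' ≠ mu' ∧
        Du (Du x) p + (lam' + mu') • Du (Dv x) p + (lam' * mu') • Dv (Dv x) p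
          ∈ Submodule.span ℂ ({x p, Du x p, Dv x p} : Set (Fin 5 → ℂ))) ∧
    -- (2) the focal locus is a single line through x p (a double line)
    ({Q : Fin 5 → ℂ | ∃ α β γ : ℂ,
        Q = α • x p + β • Du x p + γ • Dv x p ∧
        ∃ w : ℂ × ℂ, w ≠ 0 ∧ IsFocal x p w β γ}
      = (Submodule.span ℂ ({x p, Du x p + lam • Dv x p} : Set (Fin 5 → ℂ)) :
          Set (Fin 5 → ℂ))) ∧
    Module.finrank ℂ
      (Submodule.span ℂ ({x p, Du x p + lam • Dv x p} : Set (Fin 5 → ℂ))) = 2 ∧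
    -- (3) the focal points for the direction (1, lam) and for all other directions
    ({Q : Fin 5 → ℂ | ∃ α β γ : ℂ,
        Q = α • x p + β • Du x p + γ • Dv x p ∧ IsFocal x p ((1 : ℂ), lam) β γ}
      = (Submodule.span ℂ ({x p, Du x p + lam • Dv x p} : Set (Fin 5 → ℂ)) :
          Set (Fin 5 → ℂ))) ∧
    ∀ w : ℂ × ℂ, w ≠ 0 → (∀ c : ℂ, w ≠ c • ((1 : ℂ), lam)) →
      {Q : Fin 5 → ℂ | ∃ α β γ : ℂ,
          Q = α • x p + β • Du x p + γ • Dv x p ∧ IsFocal x p w β γ}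
        = (Submodule.span ℂ ({x p} : Set (Fin 5 → ℂ)) : Set (Fin 5 → ℂ)) :=
  asymptotic_focal_double_line_general x p hindep hspan lam hasym
end

section
/- Let W ⊂ ℂ⁵ be a 4-dimensional linear subspace and v ∈ ℂ⁵ ∖ W. Let Δ ⊆ ℂ² be open and y, z : Δ → W holomorphic maps such that v, y(p), z(p) are linearly independent for every p ∈ Δ. Fix p ∈ Δ, a direction w ∈ ℂ² ∖ {(0,0)}, and holomorphic functions a, b : Δ → ℂ with (a(p), b(p)) ≠ (0,0), and set Q = a·y + b·z (so Q(p) is a point of the line span_ℂ{y(p), z(p)}). Then the following are equivalent: (i) the directional derivative D_w Q(p) lies in span_ℂ{y(p), z(p)}; (ii) D_w Q(p) lies in span_ℂ{v, y(p), z(p)}; (iii) for all holomorphic α, β : Δ → ℂ, the directional derivative D_w(α·v + β·Q)(p) lies in span_ℂ{v, y(p), z(p)}. That is, Q(p) is a first-order focal point of the line congruence span{y, z} in the hyperplane W for the direction w if and only if every point of the line of ℙ⁴ joining v and Q(p) is a first-order focal point of the cone congruence of planes span{v, y, z} for the direction w. -/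
/-!
A plane `span {v, y, z}` of the cone meets the hyperplane `W` in the line `span {y, z}`, and the
derivative of `Q = a • y + b • z` stays in `W` because `Q` does. Since `v ∉ W`, the derivative lies
in the plane iff it lies in the line, which is the equivalence (i) ↔ (ii). By the Leibniz rule the
derivative of `α • v + β • Q` is `α' • v + β • Q' + β' • Q`, whose only term that can leave the plane
is `β • Q'`; this gives (ii) → (iii), and `α = 0`, `β = 1` gives back (ii).
-/

open Filter Topology

theorem HasFDerivAt.apply_mem_of_eventually_mem {𝕜 E F : Type*} [NontriviallyNormedField 𝕜]
    [NormedAddCommGroup E] [NormedSpace 𝕜 E] [NormedAddCommGroup F] [NormedSpace 𝕜 F]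
    {f : E → F} {f' : E →L[𝕜] F} {x : E} {S : Submodule 𝕜 F} (hf : HasFDerivAt f f' x)
    (hS : IsClosed (S : Set F)) (hfS : ∀ᶠ y in 𝓝 x, f y ∈ S) (w : E) : f' w ∈ S := by
  set g : 𝕜 → F := fun t => f (x + t • w)
  have hg : HasDerivAt g (f' w) 0 := by
    have hline : HasDerivAt (fun t : 𝕜 => x + t • w) w 0 := by
      simpa using ((hasDerivAt_id (0 : 𝕜)).smul_const w).const_add x
    exact hf.comp_hasDerivAt_of_eq 0 hline (by simp)
  have hgS : ∀ᶠ t in 𝓝 (0 : 𝕜), g t ∈ S := by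
    have hcont : Continuous fun t : 𝕜 => x + t • w := by fun_prop
    exact (hcont.tendsto' 0 x (by simp)).eventually hfS
  refine hS.mem_of_tendsto (hasDerivAt_iff_tendsto_slope.1 hg) ?_
  filter_upwards [nhdsWithin_le_nhds hgS] with t ht
  rw [slope_def_module]
  exact S.smul_mem _ (S.sub_mem ht hgS.self_of_nhds)

theorem Submodule.mem_span_insert_iff_of_notMem {K V : Type*} [DivisionRing K] [AddCommGroup V]
    [Module K V] {W : Submodule K V} {s : Set V} {u v : V} (hv : v ∉ W)
    (hs : Submodule.span K s ≤ W) (hu : u ∈ W) :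
    u ∈ Submodule.span K (insert v s) ↔ u ∈ Submodule.span K s := by
  refine ⟨fun h => ?_, fun h => Submodule.span_mono (Set.subset_insert v s) h⟩
  obtain ⟨c, t, ht, rfl⟩ := Submodule.mem_span_insert.1 h
  obtain rfl : c = 0 := by
    by_contra hc
    have hcv : c • v ∈ W := by simpa using W.sub_mem hu (hs ht)
    exact hv (by simpa [smul_smul, inv_mul_cancel₀ hc] using W.smul_mem c⁻¹ hcv)
  simpa using ht

theorem fderiv_smul_const_add_smul_apply_mem {𝕜 E F : Type*} [NontriviallyNormedField 𝕜]
    [NormedAddCommGroup E] [NormedSpace 𝕜 E] [NormedAddCommGroup F] [NormedSpace 𝕜 F]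
    {M : Submodule 𝕜 F} {α β : E → 𝕜} {Q : E → F} {v : F} {x : E} (w : E)
    (hα : DifferentiableAt 𝕜 α x) (hβ : DifferentiableAt 𝕜 β x) (hQ : DifferentiableAt 𝕜 Q x)
    (hv : v ∈ M) (hQM : Q x ∈ M) (hQ'M : fderiv 𝕜 Q x w ∈ M) :
    fderiv 𝕜 (fun q => α q • v + β q • Q q) x w ∈ M := by
  have hderiv : fderiv 𝕜 (fun q => α q • v + β q • Q q) x w =
      fderiv 𝕜 α x w • v + (β x • fderiv 𝕜 Q x w + fderiv 𝕜 β x w • Q x) := by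
    rw [fderiv_fun_add (hα.smul_const v) (hβ.fun_smul hQ), fderiv_smul_const hα v,
      fderiv_fun_smul hβ hQ]
    simp
  rw [hderiv]
  exact M.add_mem (M.smul_mem _ hv) (M.add_mem (M.smul_mem _ hQ'M) (M.smul_mem _ hQM))

theorem cone_congruence_focal_points_general
    (W : Submodule ℂ (Fin 5 → ℂ))
    (v : Fin 5 → ℂ) (hv : v ∉ W)
    (Δ : Set (ℂ × ℂ)) (hΔ : IsOpen Δ)
    (y z : ℂ × ℂ → (Fin 5 → ℂ))
    (hy : DifferentiableOn ℂ y Δ) (hz : DifferentiableOn ℂ z Δ)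
    (hyW : ∀ q ∈ Δ, y q ∈ W) (hzW : ∀ q ∈ Δ, z q ∈ W)
    (p : ℂ × ℂ) (hp : p ∈ Δ)
    (w : ℂ × ℂ)
    (a b : ℂ × ℂ → ℂ) (ha : DifferentiableOn ℂ a Δ) (hb : DifferentiableOn ℂ b Δ) :
    -- (i) ↔ (ii)
    ((fderiv ℂ (fun q => a q • y q + b q • z q) p w
        ∈ Submodule.span ℂ ({y p, z p} : Set (Fin 5 → ℂ))) ↔
      (fderiv ℂ (fun q => a q • y q + b q • z q) p w
        ∈ Submodule.span ℂ ({v, y p, z p} : Set (Fin 5 → ℂ)))) ∧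
    -- (i) ↔ (iii)
    ((fderiv ℂ (fun q => a q • y q + b q • z q) p w
        ∈ Submodule.span ℂ ({y p, z p} : Set (Fin 5 → ℂ))) ↔
      (∀ α β : ℂ × ℂ → ℂ, DifferentiableOn ℂ α Δ → DifferentiableOn ℂ β Δ →
        fderiv ℂ (fun q => α q • v + β q • (a q • y q + b q • z q)) p w
          ∈ Submodule.span ℂ ({v, y p, z p} : Set (Fin 5 → ℂ)))) := by
  have hΔp : Δ ∈ 𝓝 p := hΔ.mem_nhds hp
  have hQ : DifferentiableAt ℂ (fun q => a q • y q + b q • z q) p :=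
    ((ha.differentiableAt hΔp).smul (hy.differentiableAt hΔp)).add
      ((hb.differentiableAt hΔp).smul (hz.differentiableAt hΔp))
  have hQ'W : fderiv ℂ (fun q => a q • y q + b q • z q) p w ∈ W :=
    hQ.hasFDerivAt.apply_mem_of_eventually_mem W.closed_of_finiteDimensional
      (eventually_of_mem hΔp fun q hq =>
        W.add_mem (W.smul_mem _ (hyW q hq)) (W.smul_mem _ (hzW q hq))) w
  have hyzW : Submodule.span ℂ ({y p, z p} : Set (Fin 5 → ℂ)) ≤ W :=
    Submodule.span_le.2 (by rintro _ (rfl | rfl) <;> simp [hyW p hp, hzW p hp])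
  have hline_iff_plane := (Submodule.mem_span_insert_iff_of_notMem hv hyzW hQ'W).symm
  refine ⟨hline_iff_plane, fun hline α β hα hβ => ?_, fun hcone => hline_iff_plane.2 ?_⟩
  · exact fderiv_smul_const_add_smul_apply_mem w (hα.differentiableAt hΔp)
      (hβ.differentiableAt hΔp) hQ (Submodule.subset_span (Set.mem_insert v _))
      (Submodule.span_mono (Set.subset_insert _ _) (Submodule.mem_span_pair.2 ⟨a p, b p, rfl⟩))
      (hline_iff_plane.1 hline)
  · simpa only [zero_smul, one_smul, zero_add] using
      hcone (fun _ => 0) (fun _ => 1) (differentiableOn_const 0) (differentiableOn_const 1)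

/-- β₃/γ₃-congruences are cones over line congruences in a hyperplane:
a point `Q p = a p • y p + b p • z p` of the moving line `span {y p, z p}` in the
hyperplane `W` is a first-order focal point of the line congruence for the direction
`w` if and only if every point of the line of ℙ⁴ joining the vertex `v` and `Q p`
is a first-order focal point of the congruence of planes `span {v, y, z}` for `w`. -/
theorem cone_congruence_focal_points
    (W : Submodule ℂ (Fin 5 → ℂ)) (hW : Module.finrank ℂ W = 4)
    (v : Fin 5 → ℂ) (hv : v ∉ W)
    (Δ : Set (ℂ × ℂ)) (hΔ : IsOpen Δ)
    (y z : ℂ × ℂ → (Fin 5 → ℂ))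
    (hy : DifferentiableOn ℂ y Δ) (hz : DifferentiableOn ℂ z Δ)
    (hyW : ∀ q ∈ Δ, y q ∈ W) (hzW : ∀ q ∈ Δ, z q ∈ W)
    (hindep : ∀ q ∈ Δ, LinearIndependent ℂ ![v, y q, z q])
    (p : ℂ × ℂ) (hp : p ∈ Δ)
    (w : ℂ × ℂ) (hw : w ≠ 0)
    (a b : ℂ × ℂ → ℂ) (ha : DifferentiableOn ℂ a Δ) (hb : DifferentiableOn ℂ b Δ)
    (hab : (a p, b p) ≠ ((0 : ℂ), (0 : ℂ))) :
    -- (i) ↔ (ii)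
    ((fderiv ℂ (fun q => a q • y q + b q • z q) p w
        ∈ Submodule.span ℂ ({y p, z p} : Set (Fin 5 → ℂ))) ↔
      (fderiv ℂ (fun q => a q • y q + b q • z q) p w
        ∈ Submodule.span ℂ ({v, y p, z p} : Set (Fin 5 → ℂ)))) ∧
    -- (i) ↔ (iii)
    ((fderiv ℂ (fun q => a q • y q + b q • z q) p w
        ∈ Submodule.span ℂ ({y p, z p} : Set (Fin 5 → ℂ))) ↔
      (∀ α β : ℂ × ℂ → ℂ, DifferentiableOn ℂ α Δ → DifferentiableOn ℂ β Δ →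
        fderiv ℂ (fun q => α q • v + β q • (a q • y q + b q • z q)) p w
          ∈ Submodule.span ℂ ({v, y p, z p} : Set (Fin 5 → ℂ)))) :=
  cone_congruence_focal_points_general W v hv Δ hΔ y z hy hz hyW hzW p hp w a b ha hb
end

section
/- Let Δ ⊆ ℂ² be open, x : Δ → ℂ⁵ holomorphic, and p ∈ Δ a point at which x(p), x_u(p), x_v(p), x_uu(p) are linearly independent and x_uv(p) ∈ span_ℂ{x(p), x_u(p), x_v(p)}; write x_uv(p) = c₀·x(p) + c₁·x_u(p) + γ·x_v(p), and set L(p) = span_ℂ{x(p), x_u(p)}. Call a point Q = a·x(p) + b·x_u(p) of L(p) focal for the direction (w₁, w₂) ∈ ℂ² ∖ {(0,0)} if a·(w₁·x_u + w₂·x_v)(p) + b·(w₁·x_uu + w₂·x_uv)(p) ∈ L(p). Then a nonzero point Q = a·x(p) + b·x_u(p) is focal for some nonzero direction if and only if b = 0 or a + b·γ = 0; the point x(p) (case b = 0) is focal exactly for the directions proportional to (1, 0), and the point x_u(p) − γ·x(p) (case a + bγ = 0) is focal exactly for the directions proportional to (0, 1). In particular the line family L has exactly two distinct focal points on L(p).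 -/
/-!
Write `e₀, e₁, e₂, e₃` for `x, x_u, x_v, x_uu` at `p`. Conjugacy says `x_uv ≡ γ e₂` modulo
`L(p) = span {e₀, e₁}`, so modulo `L(p)` the focal vector of `a e₀ + b e₁` for the direction
`(w₁, w₂)` is `w₂ (a + b γ) e₂ + b w₁ e₃`. As `e₂, e₃` stay independent modulo `L(p)`, the point
is focal iff `w₂ (a + b γ) = 0` and `b w₁ = 0`, and every claim is read off these two equations.
-/

section LinearAlgebra

variable {R V : Type*} [CommRing R] [AddCommGroup V] [Module R V]

theorem LinearIndependent.smul_add_smul_mem_span_pair_iff {e₀ e₁ e₂ e₃ : V}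
    (h : LinearIndependent R ![e₀, e₁, e₂, e₃]) (μ ν : R) :
    μ • e₂ + ν • e₃ ∈ Submodule.span R {e₀, e₁} ↔ μ = 0 ∧ ν = 0 := by
  refine ⟨fun hmem => ?_, fun ⟨hμ, hν⟩ => by simp [hμ, hν]⟩
  obtain ⟨s, t, hst⟩ := Submodule.mem_span_pair.mp hmem
  have hzero : ∑ i, ![-s, -t, μ, ν] i • ![e₀, e₁, e₂, e₃] i = 0 := by
    simp only [Fin.sum_univ_four, Matrix.cons_val]
    linear_combination (norm := module) -hst
  have hcoeff := Fintype.linearIndependent_iff.mp h _ hzero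
  exact ⟨by simpa using hcoeff 2, by simpa using hcoeff 3⟩

theorem LinearIndependent.pair_of_four {e₀ e₁ e₂ e₃ : V}
    (h : LinearIndependent R ![e₀, e₁, e₂, e₃]) : LinearIndependent R ![e₀, e₁] := by
  convert h.comp ![0, 1] (by decide) using 1
  ext i
  fin_cases i <;> rfl

theorem focal_mem_span_pair_iff {e₀ e₁ e₂ e₃ f : V} {γ : R}
    (h : LinearIndependent R ![e₀, e₁, e₂, e₃])
    (hf : f - γ • e₂ ∈ Submodule.span R {e₀, e₁}) (a b : R) (w : R × R) :
    a • (w.1 • e₁ + w.2 • e₂) + b • (w.1 • e₃ + w.2 • f) ∈ Submodule.span R {e₀, e₁} ↔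
      w.2 * (a + b * γ) = 0 ∧ b * w.1 = 0 := by
  have hsplit : a • (w.1 • e₁ + w.2 • e₂) + b • (w.1 • e₃ + w.2 • f) =
      ((a * w.1) • e₁ + (b * w.2) • (f - γ • e₂)) +
        ((w.2 * (a + b * γ)) • e₂ + (b * w.1) • e₃) := by
    module
  have hmem : (a * w.1) • e₁ + (b * w.2) • (f - γ • e₂) ∈ Submodule.span R {e₀, e₁} :=
    add_mem (Submodule.smul_mem _ _ (Submodule.subset_span (by simp)))
      (Submodule.smul_mem _ _ hf)
  rw [hsplit, Submodule.add_mem_iff_right _ hmem, h.smul_add_smul_mem_span_pair_iff]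

end LinearAlgebra

theorem exists_ne_zero_mul_eq_zero_and_mul_eq_zero_iff {K : Type*} [CommRing K] [IsDomain K]
    (α β : K) :
    (∃ w : K × K, w ≠ 0 ∧ w.2 * α = 0 ∧ β * w.1 = 0) ↔ β = 0 ∨ α = 0 := by
  constructor
  · rintro ⟨⟨w₁, w₂⟩, hw, hα, hβ⟩
    by_cases hw₁ : w₁ = 0
    · have hw₂ : w₂ ≠ 0 := fun hw₂ => hw (by simp [hw₁, hw₂])
      exact Or.inr ((mul_eq_zero.mp hα).resolve_left hw₂)
    · exact Or.inl ((mul_eq_zero.mp hβ).resolve_right hw₁)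
  · rintro (hβ | hα)
    · exact ⟨(1, 0), by simp, by simp [hβ]⟩
    · exact ⟨(0, 1), by simp, by simp [hα]⟩

theorem Prod.exists_eq_smul_one_zero_iff {K : Type*} [Semiring K] (w : K × K) :
    (∃ c : K, w = c • ((1 : K), (0 : K))) ↔ w.2 = 0 :=
  ⟨fun ⟨c, hc⟩ => by simp [hc], fun hw => ⟨w.1, Prod.ext (by simp) (by simp [hw])⟩⟩

theorem Prod.exists_eq_smul_zero_one_iff {K : Type*} [Semiring K] (w : K × K) :
    (∃ c : K, w = c • ((0 : K), (1 : K))) ↔ w.1 = 0 :=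
  ⟨fun ⟨c, hc⟩ => by simp [hc], fun hw => ⟨w.2, Prod.ext (by simp [hw]) (by simp)⟩⟩

theorem conjugate_tangent_lines_two_focal_points_general
    (x : ℂ × ℂ → (Fin 5 → ℂ))
    (p : ℂ × ℂ)
    (hindep : LinearIndependent ℂ ![x p, Du x p, Dv x p, Du (Du x) p])
    (c₀ c₁ γ : ℂ)
    (huv : Du (Dv x) p = c₀ • x p + c₁ • Du x p + γ • Dv x p) :
    -- a nonzero point a • x p + b • x_u p is focal for some nonzero direction
    -- iff b = 0 or a + b * γ = 0
    (∀ a b : ℂ, (a, b) ≠ ((0 : ℂ), (0 : ℂ)) →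
      ((∃ w : ℂ × ℂ, w ≠ 0 ∧
          a • (w.1 • Du x p + w.2 • Dv x p) +
            b • (w.1 • Du (Du x) p + w.2 • Du (Dv x) p)
            ∈ Submodule.span ℂ ({x p, Du x p} : Set (Fin 5 → ℂ))) ↔
        (b = 0 ∨ a + b * γ = 0))) ∧
    -- x p is focal exactly for the directions proportional to (1, 0)
    (∀ w : ℂ × ℂ, w ≠ 0 →
      (((1 : ℂ) • (w.1 • Du x p + w.2 • Dv x p) +
          (0 : ℂ) • (w.1 • Du (Du x) p + w.2 • Du (Dv x) p)
          ∈ Submodule.span ℂ ({x p, Du x p} : Set (Fin 5 → ℂ))) ↔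
        ∃ c : ℂ, w = c • ((1 : ℂ), (0 : ℂ)))) ∧
    -- x_u p − γ • x p is focal exactly for the directions proportional to (0, 1)
    (∀ w : ℂ × ℂ, w ≠ 0 →
      (((-γ) • (w.1 • Du x p + w.2 • Dv x p) +
          (1 : ℂ) • (w.1 • Du (Du x) p + w.2 • Du (Dv x) p)
          ∈ Submodule.span ℂ ({x p, Du x p} : Set (Fin 5 → ℂ))) ↔
        ∃ c : ℂ, w = c • ((0 : ℂ), (1 : ℂ)))) ∧
    -- the two focal points are distinct points of ℙ⁴
    LinearIndependent ℂ ![x p, Du x p - γ • x p] := by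
  have hconj : Du (Dv x) p - γ • Dv x p ∈ Submodule.span ℂ {x p, Du x p} :=
    Submodule.mem_span_pair.mpr ⟨c₀, c₁, by rw [huv]; abel⟩
  have hfocal := focal_mem_span_pair_iff hindep hconj
  refine ⟨fun a b _ => ?_, fun w _ => ?_, fun w _ => ?_, ?_⟩
  · simp only [hfocal]
    exact exists_ne_zero_mul_eq_zero_and_mul_eq_zero_iff _ _
  · rw [hfocal, Prod.exists_eq_smul_one_zero_iff]
    simp
  · rw [hfocal, Prod.exists_eq_smul_zero_one_iff]
    simp
  · rw [sub_eq_neg_add, ← neg_smul, LinearIndependent.pair_add_smul_right_iff]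
    exact hindep.pair_of_four

/-- From the proof of Theorem 2.3.2: for a conjugate parametrization, each tangent
line `L(p) = span {x p, x_u p}` of the family carries exactly two distinct focal
points: the point of tangency `x p` (focal exactly for the directions proportional
to `(1,0)`) and the vertex point `x_u p − γ • x p` (focal exactly for the
directions proportional to `(0,1)`). -/
theorem conjugate_tangent_lines_two_focal_points
    (Δ : Set (ℂ × ℂ)) (hΔ : IsOpen Δ)
    (x : ℂ × ℂ → (Fin 5 → ℂ)) (hx : DifferentiableOn ℂ x Δ)
    (p : ℂ × ℂ) (hp : p ∈ Δ)
    (hindep : LinearIndependent ℂ ![x p, Du x p, Dv x p, Du (Du x) p])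
    (c₀ c₁ γ : ℂ)
    (huv : Du (Dv x) p = c₀ • x p + c₁ • Du x p + γ • Dv x p) :
    -- a nonzero point a • x p + b • x_u p is focal for some nonzero direction
    -- iff b = 0 or a + b * γ = 0
    (∀ a b : ℂ, (a, b) ≠ ((0 : ℂ), (0 : ℂ)) →
      ((∃ w : ℂ × ℂ, w ≠ 0 ∧
          a • (w.1 • Du x p + w.2 • Dv x p) +
            b • (w.1 • Du (Du x) p + w.2 • Du (Dv x) p)
            ∈ Submodule.span ℂ ({x p, Du x p} : Set (Fin 5 → ℂ))) ↔
        (b = 0 ∨ a + b * γ = 0))) ∧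
    -- x p is focal exactly for the directions proportional to (1, 0)
    (∀ w : ℂ × ℂ, w ≠ 0 →
      (((1 : ℂ) • (w.1 • Du x p + w.2 • Dv x p) +
          (0 : ℂ) • (w.1 • Du (Du x) p + w.2 • Du (Dv x) p)
          ∈ Submodule.span ℂ ({x p, Du x p} : Set (Fin 5 → ℂ))) ↔
        ∃ c : ℂ, w = c • ((1 : ℂ), (0 : ℂ)))) ∧
    -- x_u p − γ • x p is focal exactly for the directions proportional to (0, 1)
    (∀ w : ℂ × ℂ, w ≠ 0 →
      (((-γ) • (w.1 • Du x p + w.2 • Dv x p) +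
          (1 : ℂ) • (w.1 • Du (Du x) p + w.2 • Du (Dv x) p)
          ∈ Submodule.span ℂ ({x p, Du x p} : Set (Fin 5 → ℂ))) ↔
        ∃ c : ℂ, w = c • ((0 : ℂ), (1 : ℂ)))) ∧
    -- the two focal points are distinct points of ℙ⁴
    LinearIndependent ℂ ![x p, Du x p - γ • x p] :=
  conjugate_tangent_lines_two_focal_points_general x p hindep c₀ c₁ γ huv
end

section
/- Let Δ ⊆ ℂ be a nonempty connected open set, n ≥ 1, 1 ≤ k ≤ n, and let v₁, …, v_k : Δ → ℂⁿ be holomorphic maps such that v₁(u), …, v_k(u) are linearly independent for every u ∈ Δ and such that, for every i and every u ∈ Δ, the derivative vᵢ'(u) lies in span_ℂ{v₁(u), …, v_k(u)}. Then there is a fixed k-dimensional subspace S ⊆ ℂⁿ with span_ℂ{v₁(u), …, v_k(u)} = S for all u ∈ Δ. -/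
/-!
Write the moving frame as a family of injective operators `V u : 𝕜ᵏ →L E` and fix a left
inverse `φ` of `V u₀`. Near `u₀` the operator `M u = φ ∘ V u` is invertible, and the
renormalised frame `W = V ∘ M⁻¹` satisfies `φ ∘ W = 1`. By the focal hypothesis `W'` takes values
in `range V` (differentiating `M⁻¹` only recombines the columns of `V`), and `φ ∘ W' = 0`; since
`φ` is injective on `range V`, `W' = 0`. Hence `W`, and with it `range V = range W`, is locally
constant, and a locally constant subspace is constant on a connected domain.
-/

open Filter Topology

theorem LinearMap.eq_zero_of_range_le_of_injective_comp {R M N P Q : Type*} [CommRing R]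
    [AddCommGroup M] [Module R M] [AddCommGroup N] [Module R N] [AddCommGroup P] [Module R P]
    [AddCommGroup Q] [Module R Q] {T : Q →ₗ[R] N} {A : M →ₗ[R] N} {φ : N →ₗ[R] P}
    (hT : range T ≤ range A) (hφA : Function.Injective (φ ∘ₗ A)) (hφT : φ ∘ₗ T = 0) : T = 0 := by
  ext x
  obtain ⟨c, hc⟩ := hT ⟨x, rfl⟩
  have hc0 : c = 0 := hφA <| by simp [hc, ← LinearMap.comp_apply, hφT]
  simp [← hc, hc0]

section NormedField

variable {𝕜 E F ι : Type*} [NontriviallyNormedField 𝕜] [NormedAddCommGroup E] [NormedSpace 𝕜 E]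
  [NormedAddCommGroup F] [NormedSpace 𝕜 F] [Fintype ι] [DecidableEq ι]

theorem ContinuousLinearMap.exists_comp_eq_id_of_injective [CompleteSpace 𝕜]
    [FiniteDimensional 𝕜 E] {f : F →L[𝕜] E} (hf : Function.Injective f) :
    ∃ φ : E →L[𝕜] F, φ ∘L f = .id 𝕜 F := by
  obtain ⟨g, hg⟩ := (f : F →ₗ[𝕜] E).exists_leftInverse_of_injective (LinearMap.ker_eq_bot.mpr hf)
  exact ⟨LinearMap.toContinuousLinearMap g, ContinuousLinearMap.coe_injective hg⟩

theorem ContinuousLinearMap.range_comp_ringInverse (A : F →L[𝕜] E) {M : F →L[𝕜] F}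
    (hM : IsUnit M) : (A ∘L Ring.inverse M).range = A.range := by
  refine LinearMap.range_comp_of_range_eq_top _ (LinearMap.range_eq_top.mpr fun c => ⟨M c, ?_⟩)
  change (Ring.inverse M * M) c = c
  rw [Ring.inverse_mul_cancel M hM]
  rfl

theorem hasDerivAt_comp_ringInverse_comp_eq_zero [CompleteSpace F] {V : 𝕜 → F →L[𝕜] E}
    {φ : E →L[𝕜] F} {s : Set 𝕜} (hs : IsOpen s) (hV : ∀ u ∈ s, DifferentiableAt 𝕜 V u)
    (hM : ∀ u ∈ s, IsUnit (φ ∘L V u)) (hder : ∀ u ∈ s, (deriv V u).range ≤ (V u).range)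
    {u : 𝕜} (hu : u ∈ s) : HasDerivAt (fun x => V x ∘L Ring.inverse (φ ∘L V x)) 0 u := by
  set N : 𝕜 → F →L[𝕜] F := fun x => Ring.inverse (φ ∘L V x)
  have hW : ∀ x ∈ s, HasDerivAt (fun x => V x ∘L N x)
      (deriv V x ∘L N x + V x ∘L deriv N x) x := fun x hx =>
    (hV x hx).hasDerivAt.clm_comp
      (((hasDerivAt_const x φ).clm_comp (hV x hx).hasDerivAt).differentiableAt.inverse
        (hM x hx)).hasDerivAt
  have hφW : HasDerivAt (fun x => φ ∘L V x ∘L N x) 0 u :=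
    (hasDerivAt_const u (1 : F →L[𝕜] F)).congr_of_eventuallyEq <|
      eventually_of_mem (hs.mem_nhds hu) fun x hx => Ring.mul_inverse_cancel _ (hM x hx)
  suffices hzero : (deriv V u ∘L N u + V u ∘L deriv N u : F →L[𝕜] E) = 0 by
    simpa [hzero] using hW u hu
  refine ContinuousLinearMap.coe_injective <| LinearMap.eq_zero_of_range_le_of_injective_comp
    (A := (V u : F →ₗ[𝕜] E)) (φ := (φ : E →ₗ[𝕜] F)) ?_
    (ContinuousLinearMap.isHomeomorph_of_isUnit (hM u hu)).injective ?_
  · refine (LinearMap.range_add_le _ _).trans (sup_le ?_ (LinearMap.range_comp_le_range _ _))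
    exact (LinearMap.range_comp_le_range _ _).trans (hder u hu)
  · have hφW' := (hasDerivAt_const u φ).clm_comp (hW u hu)
    simp only [ContinuousLinearMap.zero_comp, zero_add] at hφW'
    exact congrArg ContinuousLinearMap.toLinearMap (hφW'.unique hφW)

theorem ContinuousLinearEquiv.coe_piRing_symm [CompleteSpace 𝕜] (f : ι → E) :
    ⇑((ContinuousLinearEquiv.piRing (𝕜 := 𝕜) ι).symm f) = Fintype.linearCombination 𝕜 f := by
  ext c
  change (LinearEquiv.piRing 𝕜 E ι 𝕜).symm f c = _
  simp [Fintype.linearCombination_apply]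

theorem ContinuousLinearEquiv.range_piRing_symm [CompleteSpace 𝕜] (f : ι → E) :
    ((ContinuousLinearEquiv.piRing (𝕜 := 𝕜) ι).symm f).range = Submodule.span 𝕜 (Set.range f) := by
  rw [← Fintype.range_linearCombination]
  exact congrArg LinearMap.range (LinearMap.coe_injective (coe_piRing_symm f))

variable (𝕜) in
def movingSpan (v : ι → 𝕜 → E) (u : 𝕜) : Submodule 𝕜 E :=
  Submodule.span 𝕜 (Set.range fun j => v j u)

end NormedField

section RCLike

variable {𝕜 E F ι : Type*} [RCLike 𝕜] [NormedAddCommGroup E] [NormedSpace 𝕜 E]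
  [NormedAddCommGroup F] [NormedSpace 𝕜 F] [Fintype ι] [DecidableEq ι]

theorem eventually_range_eq_of_range_deriv_le [FiniteDimensional 𝕜 E] [CompleteSpace F]
    {V : 𝕜 → F →L[𝕜] E} {u₀ : 𝕜} (hV : ∀ᶠ u in 𝓝 u₀, DifferentiableAt 𝕜 V u)
    (hinj : Function.Injective (V u₀))
    (hder : ∀ᶠ u in 𝓝 u₀, (deriv V u).range ≤ (V u).range) :
    ∀ᶠ u in 𝓝 u₀, (V u).range = (V u₀).range := by
  obtain ⟨φ, hφ⟩ := ContinuousLinearMap.exists_comp_eq_id_of_injective hinj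
  have hM : ∀ᶠ u in 𝓝 u₀, IsUnit (φ ∘L V u) := by
    have hMc : ContinuousAt (fun u => φ ∘L V u) u₀ :=
      ((hasDerivAt_const u₀ φ).clm_comp hV.self_of_nhds.hasDerivAt).continuousAt
    have hM₀ : IsUnit (φ ∘L V u₀) := hφ ▸ isUnit_one
    exact hMc.eventually_mem ((Units.isOpen (R := F →L[𝕜] F)).mem_nhds hM₀)
  obtain ⟨ε, hε, hball⟩ := Metric.eventually_nhds_iff_ball.mp (hV.and (hM.and hder))
  have hW : ∀ u ∈ Metric.ball u₀ ε, HasDerivAt (fun x => V x ∘L Ring.inverse (φ ∘L V x)) 0 u :=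
    fun u hu => hasDerivAt_comp_ringInverse_comp_eq_zero Metric.isOpen_ball
      (fun x hx => (hball x hx).1) (fun x hx => (hball x hx).2.1) (fun x hx => (hball x hx).2.2) hu
  have hu₀ : u₀ ∈ Metric.ball u₀ ε := Metric.mem_ball_self hε
  filter_upwards [Metric.ball_mem_nhds u₀ hε] with u hu
  rw [← (V u).range_comp_ringInverse (hball u hu).2.1,
    ← (V u₀).range_comp_ringInverse (hball u₀ hu₀).2.1]
  exact congrArg (fun T : F →L[𝕜] E => T.range) <|
    Metric.isOpen_ball.is_const_of_deriv_eq_zero (convex_ball u₀ ε).isPreconnected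
    (fun x hx => (hW x hx).differentiableAt.differentiableWithinAt) (fun x hx => (hW x hx).deriv)
    hu hu₀

theorem eventually_movingSpan_eq [FiniteDimensional 𝕜 E] {v : ι → 𝕜 → E} {u₀ : 𝕜}
    (hv : ∀ᶠ u in 𝓝 u₀, ∀ i, DifferentiableAt 𝕜 (v i) u)
    (hindep : LinearIndependent 𝕜 fun i => v i u₀)
    (hder : ∀ᶠ u in 𝓝 u₀, ∀ i, deriv (v i) u ∈ movingSpan 𝕜 v u) :
    ∀ᶠ u in 𝓝 u₀, movingSpan 𝕜 v u = movingSpan 𝕜 v u₀ := by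
  let Ψ := (ContinuousLinearEquiv.piRing (𝕜 := 𝕜) (E := E) ι).symm
  have hΨ : ∀ᶠ u in 𝓝 u₀, HasDerivAt (fun x => Ψ fun i => v i x) (Ψ fun i => deriv (v i) u) u :=
    hv.mono fun u hu => Ψ.hasFDerivAt.comp_hasDerivAt u (hasDerivAt_pi.2 fun i => (hu i).hasDerivAt)
  have hinj : Function.Injective (Ψ fun i => v i u₀) := by
    simpa [Ψ, ContinuousLinearEquiv.coe_piRing_symm,
      ← linearIndependent_iff_injective_fintypeLinearCombination] using hindep
  have hΨder : ∀ᶠ u in 𝓝 u₀,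
      (deriv (fun x => Ψ fun i => v i x) u).range ≤ (Ψ fun i => v i u).range := by
    filter_upwards [hΨ, hder] with u hu hu'
    rw [hu.deriv, ContinuousLinearEquiv.range_piRing_symm, ContinuousLinearEquiv.range_piRing_symm,
      Submodule.span_le]
    rintro _ ⟨i, rfl⟩
    exact hu' i
  simpa only [movingSpan, Ψ, ContinuousLinearEquiv.range_piRing_symm] using
    eventually_range_eq_of_range_deriv_le (hΨ.mono fun u hu => hu.differentiableAt) hinj hΨder

theorem IsPreconnected.movingSpan_eq [FiniteDimensional 𝕜 E] {v : ι → 𝕜 → E} {s : Set 𝕜}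
    (hs : IsPreconnected s) (hso : IsOpen s) (hv : ∀ i, DifferentiableOn 𝕜 (v i) s)
    (hindep : ∀ u ∈ s, LinearIndependent 𝕜 fun i => v i u)
    (hder : ∀ i, ∀ u ∈ s, deriv (v i) u ∈ movingSpan 𝕜 v u) {x y : 𝕜} (hx : x ∈ s) (hy : y ∈ s) :
    movingSpan 𝕜 v x = movingSpan 𝕜 v y := by
  refine hs.induction₂ (fun x y => movingSpan 𝕜 v x = movingSpan 𝕜 v y) (fun x hx => ?_)
    (fun _ _ _ _ _ _ => Eq.trans) (fun _ _ _ _ => Eq.symm) hx hy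
  have hxs : ∀ᶠ u in 𝓝 x, u ∈ s := hso.mem_nhds hx
  refine nhdsWithin_le_nhds ((eventually_movingSpan_eq ?_ (hindep x hx) ?_).mono
    fun u hu => hu.symm)
  · exact hxs.mono fun u hu i => (hv i).differentiableAt (hso.mem_nhds hu)
  · exact hxs.mono fun u hu i => hder i u hu

end RCLike

theorem developable_all_focal_constant_subspace_general
    (Δ : Set ℂ) (hconn : IsConnected Δ) (hopen : IsOpen Δ)
    (n k : ℕ)
    (v : Fin k → ℂ → (Fin n → ℂ))
    (hdiff : ∀ i, DifferentiableOn ℂ (v i) Δ)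
    (hindep : ∀ u ∈ Δ, LinearIndependent ℂ (fun i => v i u))
    (hfocal : ∀ i, ∀ u ∈ Δ,
      deriv (v i) u ∈ Submodule.span ℂ (Set.range (fun j => v j u))) :
    ∃ S : Submodule ℂ (Fin n → ℂ), Module.finrank ℂ S = k ∧
      ∀ u ∈ Δ, Submodule.span ℂ (Set.range (fun j => v j u)) = S := by
  obtain ⟨u₀, hu₀⟩ := hconn.nonempty
  refine ⟨movingSpan ℂ v u₀, ?_, fun u hu => ?_⟩
  · rw [movingSpan, finrank_span_eq_card (hindep u₀ hu₀), Fintype.card_fin]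
  · exact hconn.isPreconnected.movingSpan_eq hopen hdiff hindep hfocal hu hu₀

/-- A 1-parameter holomorphic family of (k−1)-planes of ℙⁿ⁻¹, all of whose points
are first-order focal points (the derivative of every spanning section stays in the
moving subspace), is a constant family: the moving k-dimensional subspace of ℂⁿ is
a fixed subspace `S`. -/
theorem developable_all_focal_constant_subspace
    (Δ : Set ℂ) (hne : Δ.Nonempty) (hconn : IsConnected Δ) (hopen : IsOpen Δ)
    (n k : ℕ) (hn : 1 ≤ n) (hk1 : 1 ≤ k) (hkn : k ≤ n)
    (v : Fin k → ℂ → (Fin n → ℂ))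
    (hdiff : ∀ i, DifferentiableOn ℂ (v i) Δ)
    (hindep : ∀ u ∈ Δ, LinearIndependent ℂ (fun i => v i u))
    (hfocal : ∀ i, ∀ u ∈ Δ,
      deriv (v i) u ∈ Submodule.span ℂ (Set.range (fun j => v j u))) :
    ∃ S : Submodule ℂ (Fin n → ℂ), Module.finrank ℂ S = k ∧
      ∀ u ∈ Δ, Submodule.span ℂ (Set.range (fun j => v j u)) = S :=
  developable_all_focal_constant_subspace_general Δ hconn hopen n k v hdiff hindep hfocal
end

section
/- Let Δ ⊆ ℂ be a nonempty connected open set and Q₁, Q₂, z : Δ → ℂ⁵ holomorphic maps, pointwise linearly independent; set Π(u) = span_ℂ{Q₁(u), Q₂(u), z(u)} and L(u) = span_ℂ{Q₁(u), Q₂(u)}. Assume Q₁'(u) ∈ Π(u) and Q₂'(u) ∈ Π(u) for every u ∈ Δ (L is a focal line of the family Π). Let P : Δ → ℂ⁵ be holomorphic with P(u) ∈ L(u) and P'(u) ∈ L(u) for every u ∈ Δ (P is a second-order focal point), and assume P(u), P'(u), P''(u) are linearly independent for every u ∈ Δ. Then for every u ∈ Δ one has L(u) = span_ℂ{P(u),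 P'(u)} and Π(u) = span_ℂ{P(u), P'(u), P''(u)}; that is, the family consists of the osculating planes to the curve traced by P, and the focal lines are its tangent lines. -/
/-!
Near any point the focal line has a frame `Q₁, Q₂` and, by Cramer's rule on a nonvanishing
`2 × 2` minor, `P' = a Q₁ + b Q₂` with holomorphic coefficients. Differentiating,
`P'' = a Q₁' + b Q₂' + a' Q₁ + b' Q₂` lies in `Π` because `L` is a focal line. Hence
`span {P, P'} ⊆ L` and `span {P, P', P''} ⊆ Π`, and these are equalities since the
dimensions agree.
-/

open Filter Set Submodule Topology

section LinearAlgebra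

variable {K V : Type*} [Field K] [AddCommGroup V] [Module K V]

theorem LinearIndependent.pair_of_triple {a b c : V} (h : LinearIndependent K ![a, b, c]) :
    LinearIndependent K ![a, b] := by
  convert h.comp _ (Fin.castSucc_injective 2) using 1
  ext i; fin_cases i <;> rfl

theorem Submodule.span_range_eq_of_le_of_linearIndependent {n : ℕ} {v w : Fin n → V}
    (hv : LinearIndependent K v) (hw : LinearIndependent K w)
    (hle : span K (range v) ≤ span K (range w)) : span K (range v) = span K (range w) :=
  have := FiniteDimensional.span_of_finite K (finite_range w)
  eq_of_le_of_finrank_le hle <| by rw [finrank_span_eq_card hv, finrank_span_eq_card hw]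

variable {ι : Type*}

theorem exists_mul_sub_mul_ne_zero_of_linearIndependent {x y : ι → K}
    (h : LinearIndependent K ![x, y]) : ∃ i j, x i * y j - x j * y i ≠ 0 := by
  by_contra! hxy
  refine h.ne_zero 1 (funext fun j ↦ ?_)
  refine (LinearIndependent.pair_iff.mp h (y j) (-x j) (funext fun i ↦ ?_)).1
  simp only [Pi.add_apply, Pi.smul_apply, smul_eq_mul, Pi.zero_apply]
  linear_combination hxy i j

theorem eq_add_of_mem_span_pair_of_mul_sub_mul_ne_zero {x y v : ι → K} {i j : ι}
    (hv : v ∈ span K {x, y}) (hd : x i * y j - x j * y i ≠ 0) :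
    v = ((v i * y j - v j * y i) / (x i * y j - x j * y i)) • x
      + ((x i * v j - x j * v i) / (x i * y j - x j * y i)) • y := by
  obtain ⟨s, t, rfl⟩ := mem_span_pair.mp hv
  congr 2 <;> rw [eq_div_iff hd] <;> simp only [Pi.add_apply, Pi.smul_apply, smul_eq_mul] <;> ring

end LinearAlgebra

section Calculus

variable {𝕜 : Type*} [NontriviallyNormedField 𝕜] {u₀ : 𝕜}

theorem deriv_smul_add_smul_mem_sup_span {F : Type*} [NormedAddCommGroup F] [NormedSpace 𝕜 F]
    {a b : 𝕜 → 𝕜} {Q₁ Q₂ : 𝕜 → F} (ha : DifferentiableAt 𝕜 a u₀) (hb : DifferentiableAt 𝕜 b u₀)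
    (hQ₁ : DifferentiableAt 𝕜 Q₁ u₀) (hQ₂ : DifferentiableAt 𝕜 Q₂ u₀) :
    deriv (fun u ↦ a u • Q₁ u + b u • Q₂ u) u₀ ∈
      span 𝕜 {Q₁ u₀, Q₂ u₀} ⊔ span 𝕜 {deriv Q₁ u₀, deriv Q₂ u₀} := by
  rw [deriv_fun_add (ha.fun_smul hQ₁) (hb.fun_smul hQ₂), deriv_fun_smul ha hQ₁,
    deriv_fun_smul hb hQ₂]
  exact add_mem
    (add_mem (smul_mem _ _ (mem_sup_right (subset_span (by simp))))
      (smul_mem _ _ (mem_sup_left (subset_span (by simp)))))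
    (add_mem (smul_mem _ _ (mem_sup_right (subset_span (by simp))))
      (smul_mem _ _ (mem_sup_left (subset_span (by simp)))))

variable {ι : Type*} [Fintype ι] {Q₁ Q₂ f : 𝕜 → ι → 𝕜}

theorem exists_differentiableAt_coeffs_of_eventually_mem_span_pair
    (hQ₁ : DifferentiableAt 𝕜 Q₁ u₀) (hQ₂ : DifferentiableAt 𝕜 Q₂ u₀)
    (hf : DifferentiableAt 𝕜 f u₀) (hind : LinearIndependent 𝕜 ![Q₁ u₀, Q₂ u₀])
    (hmem : ∀ᶠ u in 𝓝 u₀, f u ∈ span 𝕜 {Q₁ u, Q₂ u}) :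
    ∃ a b : 𝕜 → 𝕜, DifferentiableAt 𝕜 a u₀ ∧ DifferentiableAt 𝕜 b u₀ ∧
      f =ᶠ[𝓝 u₀] fun u ↦ a u • Q₁ u + b u • Q₂ u := by
  obtain ⟨i, j, hd⟩ := exists_mul_sub_mul_ne_zero_of_linearIndependent hind
  set d : 𝕜 → 𝕜 := fun u ↦ Q₁ u i * Q₂ u j - Q₁ u j * Q₂ u i
  have hd_diff : DifferentiableAt 𝕜 d u₀ := by fun_prop
  refine ⟨fun u ↦ (f u i * Q₂ u j - f u j * Q₂ u i) / d u,
    fun u ↦ (Q₁ u i * f u j - Q₁ u j * f u i) / d u, by fun_prop (disch := exact hd),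
    by fun_prop (disch := exact hd), ?_⟩
  filter_upwards [hmem, hd_diff.continuousAt.eventually_ne hd] with u hu hdu
  exact eq_add_of_mem_span_pair_of_mul_sub_mul_ne_zero hu hdu

theorem deriv_mem_sup_span_of_eventually_mem_span_pair
    (hQ₁ : DifferentiableAt 𝕜 Q₁ u₀) (hQ₂ : DifferentiableAt 𝕜 Q₂ u₀)
    (hf : DifferentiableAt 𝕜 f u₀) (hind : LinearIndependent 𝕜 ![Q₁ u₀, Q₂ u₀])
    (hmem : ∀ᶠ u in 𝓝 u₀, f u ∈ span 𝕜 {Q₁ u, Q₂ u}) :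
    deriv f u₀ ∈ span 𝕜 {Q₁ u₀, Q₂ u₀} ⊔ span 𝕜 {deriv Q₁ u₀, deriv Q₂ u₀} := by
  obtain ⟨a, b, ha, hb, hfab⟩ :=
    exists_differentiableAt_coeffs_of_eventually_mem_span_pair hQ₁ hQ₂ hf hind hmem
  rw [hfab.deriv_eq]
  exact deriv_smul_add_smul_mem_sup_span ha hb hQ₁ hQ₂

end Calculus

theorem developable_family_osculating_planes_general
    (Δ : Set ℂ) (hopen : IsOpen Δ)
    (Q₁ Q₂ z : ℂ → (Fin 5 → ℂ))
    (hQ₁ : DifferentiableOn ℂ Q₁ Δ) (hQ₂ : DifferentiableOn ℂ Q₂ Δ)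
    (hindep : ∀ u ∈ Δ, LinearIndependent ℂ ![Q₁ u, Q₂ u, z u])
    (hfoc1 : ∀ u ∈ Δ,
      deriv Q₁ u ∈ Submodule.span ℂ ({Q₁ u, Q₂ u, z u} : Set (Fin 5 → ℂ)))
    (hfoc2 : ∀ u ∈ Δ,
      deriv Q₂ u ∈ Submodule.span ℂ ({Q₁ u, Q₂ u, z u} : Set (Fin 5 → ℂ)))
    (P : ℂ → (Fin 5 → ℂ)) (hP : DifferentiableOn ℂ P Δ)
    (hPL : ∀ u ∈ Δ, P u ∈ Submodule.span ℂ ({Q₁ u, Q₂ u} : Set (Fin 5 → ℂ)))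
    (hP'L : ∀ u ∈ Δ, deriv P u ∈ Submodule.span ℂ ({Q₁ u, Q₂ u} : Set (Fin 5 → ℂ)))
    (hPind : ∀ u ∈ Δ, LinearIndependent ℂ ![P u, deriv P u, deriv (deriv P) u]) :
    ∀ u ∈ Δ,
      Submodule.span ℂ ({Q₁ u, Q₂ u} : Set (Fin 5 → ℂ))
        = Submodule.span ℂ ({P u, deriv P u} : Set (Fin 5 → ℂ)) ∧
      Submodule.span ℂ ({Q₁ u, Q₂ u, z u} : Set (Fin 5 → ℂ))
        = Submodule.span ℂ ({P u, deriv P u, deriv (deriv P) u} : Set (Fin 5 → ℂ)) := by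
  intro u hu
  have hΔ : Δ ∈ 𝓝 u := hopen.mem_nhds hu
  have hL_le : span ℂ {Q₁ u, Q₂ u} ≤ span ℂ {Q₁ u, Q₂ u, z u} :=
    span_mono (insert_subset_insert (singleton_subset_iff.mpr (mem_insert _ _)))
  have hP'' : deriv (deriv P) u ∈ span ℂ {Q₁ u, Q₂ u, z u} :=
    sup_le hL_le (span_le.mpr (pair_subset (hfoc1 u hu) (hfoc2 u hu)))
      (deriv_mem_sup_span_of_eventually_mem_span_pair (hQ₁.differentiableAt hΔ)
        (hQ₂.differentiableAt hΔ) ((hP.analyticOnNhd hopen).deriv u hu).differentiableAt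
        (hindep u hu).pair_of_triple (eventually_of_mem hΔ hP'L))
  have hline := span_range_eq_of_le_of_linearIndependent (hPind u hu).pair_of_triple
    (hindep u hu).pair_of_triple
  have hplane := span_range_eq_of_le_of_linearIndependent (hPind u hu) (hindep u hu)
  simp only [Matrix.range_cons, Matrix.range_empty, union_empty, singleton_union] at hline hplane
  exact ⟨(hline (span_le.mpr (pair_subset (hPL u hu) (hP'L u hu)))).symm,
    (hplane (span_le.mpr (insert_subset (hL_le (hPL u hu))
      (pair_subset (hL_le (hP'L u hu)) hP'')))).symm⟩

/-- Case 2(b) of Proposition 1.1.1: a 1-dimensional developable family of planes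
`Π(u) = span {Q₁ u, Q₂ u, z u}` with focal line `L(u) = span {Q₁ u, Q₂ u}` whose
second-order focal locus is a curve `P` consists of the osculating planes to `P`,
the focal lines being its tangent lines. -/
theorem developable_family_osculating_planes
    (Δ : Set ℂ) (hne : Δ.Nonempty) (hconn : IsConnected Δ) (hopen : IsOpen Δ)
    (Q₁ Q₂ z : ℂ → (Fin 5 → ℂ))
    (hQ₁ : DifferentiableOn ℂ Q₁ Δ) (hQ₂ : DifferentiableOn ℂ Q₂ Δ)
    (hz : DifferentiableOn ℂ z Δ)
    (hindep : ∀ u ∈ Δ, LinearIndependent ℂ ![Q₁ u, Q₂ u, z u])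
    (hfoc1 : ∀ u ∈ Δ,
      deriv Q₁ u ∈ Submodule.span ℂ ({Q₁ u, Q₂ u, z u} : Set (Fin 5 → ℂ)))
    (hfoc2 : ∀ u ∈ Δ,
      deriv Q₂ u ∈ Submodule.span ℂ ({Q₁ u, Q₂ u, z u} : Set (Fin 5 → ℂ)))
    (P : ℂ → (Fin 5 → ℂ)) (hP : DifferentiableOn ℂ P Δ)
    (hPL : ∀ u ∈ Δ, P u ∈ Submodule.span ℂ ({Q₁ u, Q₂ u} : Set (Fin 5 → ℂ)))
    (hP'L : ∀ u ∈ Δ, deriv P u ∈ Submodule.span ℂ ({Q₁ u, Q₂ u} : Set (Fin 5 → ℂ)))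
    (hPind : ∀ u ∈ Δ, LinearIndependent ℂ ![P u, deriv P u, deriv (deriv P) u]) :
    ∀ u ∈ Δ,
      Submodule.span ℂ ({Q₁ u, Q₂ u} : Set (Fin 5 → ℂ))
        = Submodule.span ℂ ({P u, deriv P u} : Set (Fin 5 → ℂ)) ∧
      Submodule.span ℂ ({Q₁ u, Q₂ u, z u} : Set (Fin 5 → ℂ))
        = Submodule.span ℂ ({P u, deriv P u, deriv (deriv P) u} : Set (Fin 5 → ℂ)) :=
  developable_family_osculating_planes_general Δ hopen Q₁ Q₂ z hQ₁ hQ₂ hindep hfoc1 hfoc2 P hP hPL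
    hP'L hPind
end

section
/- Let f₁₁, f₁₂, f₂₁, f₂₂ : ℂ³ → ℂ be linear forms and define the quadratic form q(x) = f₁₁(x)·f₂₂(x) − f₁₂(x)·f₂₁(x). Then q is reducible — i.e., there exist linear forms l, m : ℂ³ → ℂ with q(x) = l(x)·m(x) for all x (including the case q = 0) — if and only if there exists (λ, μ) ∈ ℂ² ∖ {(0,0)} such that the two linear forms λ·f₁₁ + μ·f₂₁ and λ·f₁₂ + μ·f₂₂ are linearly dependent. -/
/-!
`⇐`: if `s • u + t • v = 0` for the row `(u, v) = (λ, μ) M` of `M = (fᵢⱼ)`, then `u` and `v` are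
multiples of a single form `w`, and `λ q = u f₂₂ - v f₂₁`, `μ q = v f₁₁ - u f₁₂` are both
divisible by `w`.

`⇒`: if `q = l m`, pick `p ≠ 0` with `l p = m p = 0`, a singular point of the conic. The
vanishing of the differential of `q` at `p` says `tr (adj M(p) · M) = 0`. If `M(p) ≠ 0`, then
`adj M(p)` is a nonzero matrix of rank one, `β αᵀ`, so `αᵀ M β = 0` and `α` is a developable
direction. If `M(p) = 0`, the four forms lie in the plane of forms vanishing at `p`; there
`(s, t) ↦ s f₁₁ + t f₁₂` factors through the injective map `(s, t) ↦ s f₂₁ + t f₂₂` (or the latter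
is not injective), and an eigenvalue `c` of the resulting endomorphism of `K²`, which exists over
an algebraically closed field, gives the direction `(1, -c)`.
-/

open Module Submodule

variable {K : Type*} [Field K] {E : Type*} [AddCommGroup E] [Module K E]

theorem exists_smul_eq_of_not_linearIndependent_pair {u v : E}
    (h : ¬ LinearIndependent K ![u, v]) : ∃ w : E, ∃ a b : K, u = a • w ∧ v = b • w := by
  by_cases hu : u = 0
  · exact ⟨v, 0, 1, by simp [hu], by simp⟩
  · obtain ⟨a, rfl⟩ : ∃ a : K, a • u = v := by simpa [LinearIndependent.pair_iff' hu] using h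
    exact ⟨u, 1, a, by simp, rfl⟩

theorem not_linearIndependent_pair_of_mul_eq_mul {x y : Fin 2 → K} (h : x 0 * y 1 = x 1 * y 0) :
    ¬ LinearIndependent K ![x, y] := by
  change ¬ LinearIndependent K (Matrix.of ![x, y]).row
  rw [Matrix.linearIndependent_rows_iff_isUnit, Matrix.isUnit_iff_isUnit_det, Matrix.det_fin_two]
  simp [h]

variable (K) in
def HasDevelopableDirection (f₁₁ f₁₂ f₂₁ f₂₂ : E) : Prop :=
  ∃ lm : K × K, lm ≠ 0 ∧
    ¬ LinearIndependent K ![lm.1 • f₁₁ + lm.2 • f₂₁, lm.1 • f₁₂ + lm.2 • f₂₂]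

theorem hasDevelopableDirection_of_polar {f₁₁ f₁₂ f₂₁ f₂₂ : E} {a b c d : K}
    (hdet : a * d = b * c) (hne : ¬(a = 0 ∧ b = 0 ∧ c = 0 ∧ d = 0))
    (hpolar : d • f₁₁ - c • f₁₂ - b • f₂₁ + a • f₂₂ = 0) :
    HasDevelopableDirection K f₁₁ f₁₂ f₂₁ f₂₂ := by
  obtain ⟨w, γ₁, γ₂, hab, hcd⟩ := exists_smul_eq_of_not_linearIndependent_pair
    (not_linearIndependent_pair_of_mul_eq_mul (x := ![a, b]) (y := ![c, d]) (by simpa using hdet))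
  have ha : a = γ₁ * w 0 := by simpa using congr_fun hab 0
  have hb : b = γ₁ * w 1 := by simpa using congr_fun hab 1
  have hc : c = γ₂ * w 0 := by simpa using congr_fun hcd 0
  have hd : d = γ₂ * w 1 := by simpa using congr_fun hcd 1
  -- `adj !![a, b; c, d] = !![d, -b; -c, a]` is the rank-one matrix `(w 1, -w 0)ᵀ (γ₂, -γ₁)`.
  refine ⟨(γ₂, -γ₁), ?_, ?_⟩
  · intro h
    obtain ⟨h₂, h₁⟩ := Prod.mk_eq_zero.mp h
    rw [neg_eq_zero] at h₁
    exact hne (by simp [ha, hb, hc, hd, h₁, h₂])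
  · rw [LinearIndependent.pair_iff]
    intro h
    obtain ⟨h₁, h₀⟩ := h (w 1) (-w 0) (by rw [← hpolar, ha, hb, hc, hd]; module)
    exact hne (by simp [ha, hb, hc, hd, h₁, neg_eq_zero.mp h₀])

section IsAlgClosed

variable [IsAlgClosed K]

theorem exists_ne_zero_not_injective_smul_add_smul {V W : Type*} [AddCommGroup V] [Module K V]
    [FiniteDimensional K V] [Nontrivial V] [AddCommGroup W] [Module K W] (φ ψ : V →ₗ[K] W)
    (h : finrank K ↥(LinearMap.range φ ⊔ LinearMap.range ψ) ≤ finrank K V) :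
    ∃ lm : K × K, lm ≠ 0 ∧ ¬ Function.Injective (lm.1 • ψ + lm.2 • φ) := by
  by_cases hφ : Function.Injective φ
  swap
  · exact ⟨(0, 1), by simp, by simpa using hφ⟩
  have hrange : LinearMap.range φ ⊔ LinearMap.range ψ = LinearMap.range φ := by
    refine (eq_of_le_of_finrank_le le_sup_left ?_).symm
    rwa [LinearMap.finrank_range_of_inj hφ]
  have hψ (v : V) : ψ v ∈ LinearMap.range φ :=
    hrange ▸ mem_sup_right (LinearMap.mem_range_self ψ v)
  let T : Module.End K V :=
    (LinearEquiv.ofInjective φ hφ).symm.toLinearMap ∘ₗ ψ.codRestrict _ hψ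
  obtain ⟨c, hc⟩ := Module.End.exists_eigenvalue T
  obtain ⟨v, hv⟩ := hc.exists_hasEigenvector
  have hψv : ψ v = c • φ v := by
    simpa [T] using congr_arg (fun x => (LinearEquiv.ofInjective φ hφ x : W)) hv.apply_eq_smul
  refine ⟨(1, -c), by simp, fun hinj => hv.2 (hinj ?_)⟩
  simp [hψv]

theorem hasDevelopableDirection_of_finrank_span_le {f₁₁ f₁₂ f₂₁ f₂₂ : E}
    (h : finrank K (span K {f₁₁, f₁₂, f₂₁, f₂₂}) ≤ 2) :
    HasDevelopableDirection K f₁₁ f₁₂ f₂₁ f₂₂ := by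
  have hunion : Set.range ![f₂₁, f₂₂] ∪ Set.range ![f₁₁, f₁₂] = {f₁₁, f₁₂, f₂₁, f₂₂} := by
    ext
    simp only [Matrix.range_cons, Matrix.range_empty, Set.union_empty, Set.mem_union,
      Set.mem_singleton_iff, Set.mem_insert_iff]
    tauto
  obtain ⟨lm, hlm, hinj⟩ := exists_ne_zero_not_injective_smul_add_smul
    (Fintype.linearCombination K ![f₂₁, f₂₂]) (Fintype.linearCombination K ![f₁₁, f₁₂])
    (by rwa [Fintype.range_linearCombination, Fintype.range_linearCombination, ← span_union,
      finrank_fin_fun, hunion])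
  refine ⟨lm, hlm, fun hli => hinj ?_⟩
  convert hli.fintypeLinearCombination_injective
  refine LinearMap.ext fun x => ?_
  simp [Fintype.linearCombination_apply, Fin.sum_univ_two]
  module

end IsAlgClosed

section LinearForms

variable {V : Type*} [AddCommGroup V] [Module K V]

theorem exists_mul_eq_of_hasDevelopableDirection {f₁₁ f₁₂ f₂₁ f₂₂ : V →ₗ[K] K}
    (h : HasDevelopableDirection K f₁₁ f₁₂ f₂₁ f₂₂) :
    ∃ l m : V →ₗ[K] K, ∀ x, f₁₁ x * f₂₂ x - f₁₂ x * f₂₁ x = l x * m x := by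
  obtain ⟨⟨lam, mu⟩, hne, hdep⟩ := h
  obtain ⟨w, a, b, hu, hv⟩ := exists_smul_eq_of_not_linearIndependent_pair hdep
  have hu' (x : V) : lam * f₁₁ x + mu * f₂₁ x = a * w x := by simpa using LinearMap.congr_fun hu x
  have hv' (x : V) : lam * f₁₂ x + mu * f₂₂ x = b * w x := by simpa using LinearMap.congr_fun hv x
  by_cases hlam : lam = 0
  · have hmu : mu ≠ 0 := fun hmu => hne (by simp [hlam, hmu])
    refine ⟨w, mu⁻¹ • (b • f₁₁ - a • f₁₂), fun x => ?_⟩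
    simp only [LinearMap.smul_apply, LinearMap.sub_apply, smul_eq_mul]
    field_simp
    linear_combination f₁₁ x * hv' x - f₁₂ x * hu' x
  · refine ⟨w, lam⁻¹ • (a • f₂₂ - b • f₂₁), fun x => ?_⟩
    simp only [LinearMap.smul_apply, LinearMap.sub_apply, smul_eq_mul]
    field_simp
    linear_combination f₂₂ x * hu' x - f₂₁ x * hv' x

theorem polar_eq_zero_of_forall_eq_mul {f₁₁ f₁₂ f₂₁ f₂₂ l m : V →ₗ[K] K}
    (hq : ∀ x, f₁₁ x * f₂₂ x - f₁₂ x * f₂₁ x = l x * m x) {p : V} (hl : l p = 0) (hm : m p = 0) :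
    f₂₂ p • f₁₁ - f₂₁ p • f₁₂ - f₁₂ p • f₂₁ + f₁₁ p • f₂₂ = 0 := by
  refine LinearMap.ext fun x => ?_
  have hxp := hq (x + p)
  simp only [map_add, hl, hm, add_zero] at hxp
  simp only [LinearMap.add_apply, LinearMap.sub_apply, LinearMap.smul_apply, smul_eq_mul,
    LinearMap.zero_apply]
  linear_combination hxp - hq x - hq p - m p * hl

variable [FiniteDimensional K V]

theorem exists_ne_zero_apply_eq_zero_of_two_lt_finrank (hV : 2 < finrank K V)
    (l m : V →ₗ[K] K) : ∃ p : V, p ≠ 0 ∧ l p = 0 ∧ m p = 0 := by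
  have hker : LinearMap.ker (l.prod m) ≠ ⊥ :=
    LinearMap.ker_ne_bot_of_finrank_lt (by simpa using hV)
  obtain ⟨p, hp, hp0⟩ := (Submodule.ne_bot_iff _).mp hker
  exact ⟨p, hp0, by simpa [Prod.ext_iff] using hp⟩

theorem finrank_dualAnnihilator_span_singleton {p : V} (hp : p ≠ 0) :
    finrank K (K ∙ p).dualAnnihilator = finrank K V - 1 := by
  have := Subspace.finrank_add_finrank_dualAnnihilator_eq (K ∙ p)
  rw [finrank_span_singleton hp] at this
  omega

theorem exists_mul_eq_iff_hasDevelopableDirection [IsAlgClosed K] (hV : finrank K V = 3)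
    (f₁₁ f₁₂ f₂₁ f₂₂ : V →ₗ[K] K) :
    (∃ l m : V →ₗ[K] K, ∀ x, f₁₁ x * f₂₂ x - f₁₂ x * f₂₁ x = l x * m x) ↔
      HasDevelopableDirection K f₁₁ f₁₂ f₂₁ f₂₂ := by
  refine ⟨fun ⟨l, m, hq⟩ => ?_, exists_mul_eq_of_hasDevelopableDirection⟩
  obtain ⟨p, hp, hl, hm⟩ := exists_ne_zero_apply_eq_zero_of_two_lt_finrank (by omega) l m
  by_cases hvanish : f₁₁ p = 0 ∧ f₁₂ p = 0 ∧ f₂₁ p = 0 ∧ f₂₂ p = 0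
  · refine hasDevelopableDirection_of_finrank_span_le ?_
    have hle : span K {f₁₁, f₁₂, f₂₁, f₂₂} ≤ (K ∙ p).dualAnnihilator := by
      obtain ⟨h₁₁, h₁₂, h₂₁, h₂₂⟩ := hvanish
      simp [span_le, Set.insert_subset_iff, h₁₁, h₁₂, h₂₁, h₂₂]
    calc finrank K (span K {f₁₁, f₁₂, f₂₁, f₂₂})
        ≤ finrank K (K ∙ p).dualAnnihilator := finrank_mono hle
      _ = 2 := by rw [finrank_dualAnnihilator_span_singleton hp, hV]
  · exact hasDevelopableDirection_of_polar (by linear_combination hq p + m p * hl) hvanish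
      (polar_eq_zero_of_forall_eq_mul hq hl hm)

end LinearForms

/-- Pointwise content of Proposition 1.1.2: the focal conic
`f₁₁f₂₂ − f₁₂f₂₁ = 0` on ℙ² is degenerate (its equation is a product of two linear
forms, possibly zero) if and only if there is a direction `(λ, μ) ≠ (0,0)` for which
the two linear forms `λf₁₁ + μf₂₁` and `λf₁₂ + μf₂₂` are linearly dependent, i.e.
a developable direction exists. -/
theorem focal_conic_degenerate_iff_developable_direction
    (f₁₁ f₁₂ f₂₁ f₂₂ : (Fin 3 → ℂ) →ₗ[ℂ] ℂ) :
    (∃ l m : (Fin 3 → ℂ) →ₗ[ℂ] ℂ, ∀ x : Fin 3 → ℂ,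
        f₁₁ x * f₂₂ x - f₁₂ x * f₂₁ x = l x * m x) ↔
      (∃ lm : ℂ × ℂ, lm ≠ 0 ∧
        ¬ LinearIndependent ℂ ![lm.1 • f₁₁ + lm.2 • f₂₁, lm.1 • f₁₂ + lm.2 • f₂₂]) :=
  exists_mul_eq_iff_hasDevelopableDirection (by simp) f₁₁ f₁₂ f₂₁ f₂₂
end

section
/- Let f₁₂, f₂₁, f₂₂ : ℂ³ → ℂ be linear forms and a ∈ ℂ with a ≠ 0; set f₁₁ = a·f₂₁. Assume f₁₂ and f₂₂ are linearly independent and f₂₁ ∉ span_ℂ{f₁₂, f₂₂}. Then: (1) for (λ, μ) ∈ ℂ² ∖ {(0,0)}, the forms λ·f₁₁ + μ·f₂₁ and λ·f₁₂ + μ·f₂₂ are linearly dependent if and only if μ = −a·λ (there is exactly one developable direction); (2) the focal conic satisfies f₁₁·f₂₂ − f₁₂·f₂₁ = f₂₁·(a·f₂₂ − f₁₂), where the linear forms f₂₁ and a·f₂₂ − f₁₂ are linearly independent (the conic is a pair of distinct lines); (3) for every (λ, μ) ∈ ℂ² ∖ {(0,0)} with μ ≠ −a·λ, the forms λ·f₁₁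 + μ·f₂₁ and λ·f₁₂ + μ·f₂₂ are linearly independent, so their common kernel {x ∈ ℂ³ : f₂₁(x) = 0 and λ·f₁₂(x) + μ·f₂₂(x) = 0} is 1-dimensional (the focal locus for that direction is a single point). -/
/-!
Because `f₁₁ = a • f₂₁`, the first form of the direction `(l : m)` is `(a * l + m) • f₂₁`, which
lies outside `span {f₁₂, f₂₂}`, while the second form `l • f₁₂ + m • f₂₂` is a nonzero element of
that span. Hence the pair is independent exactly when `a * l + m ≠ 0`. Two independent forms span
a plane in the dual of `ℂ³`, whose dual coannihilator, the common kernel, is a line.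
-/

open Module Submodule

section LinearIndependentPair

variable {K V : Type*} [DivisionRing K] [AddCommGroup V] [Module K V]

theorem linearIndependent_pair_of_notMem_of_mem {p : Submodule K V} {w g : V}
    (hw : w ∉ p) (hg : g ∈ p) (hg₀ : g ≠ 0) : LinearIndependent K ![w, g] :=
  linearIndependent_fin2.mpr ⟨hg₀, fun c hc => hw <| by
    simp only [Matrix.cons_val_one, Matrix.cons_val_zero] at hc
    exact hc ▸ p.smul_mem c hg⟩

theorem LinearIndependent.smul_add_smul_ne_zero {u v : V} (huv : LinearIndependent K ![u, v])
    {l m : K} (hlm : (l, m) ≠ (0, 0)) : l • u + m • v ≠ 0 := fun h =>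
  hlm (Prod.ext_iff.mpr (LinearIndependent.pair_iff.mp huv l m h))

end LinearIndependentPair

theorem ker_inf_ker_eq_dualCoannihilator_span {R M : Type*} [CommRing R] [AddCommGroup M]
    [Module R M] (φ ψ : Dual R M) :
    LinearMap.ker φ ⊓ LinearMap.ker ψ = (span R {φ, ψ}).dualCoannihilator := by
  refine SetLike.coe_injective ?_
  rw [coe_dualCoannihilator_span]
  ext x
  simp

theorem finrank_ker_inf_ker_add_two {K V : Type*} [Field K] [AddCommGroup V] [Module K V]
    [FiniteDimensional K V] {φ ψ : Dual K V} (h : LinearIndependent K ![φ, ψ]) :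
    finrank K ↥(LinearMap.ker φ ⊓ LinearMap.ker ψ) + 2 = finrank K V := by
  have hspan : finrank K (span K {φ, ψ}) = 2 := by
    rw [← Matrix.range_cons_cons_empty, finrank_span_eq_card h, Fintype.card_fin]
  rw [ker_inf_ker_eq_dualCoannihilator_span, ← hspan, add_comm]
  exact Subspace.finrank_add_finrank_dualCoannihilator_eq _

theorem one_pencil_degenerates_alpha_case_general
    (f₁₂ f₂₁ f₂₂ : (Fin 3 → ℂ) →ₗ[ℂ] ℂ) (a : ℂ)
    (f₁₁ : (Fin 3 → ℂ) →ₗ[ℂ] ℂ) (hf₁₁ : f₁₁ = a • f₂₁)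
    (hind : LinearIndependent ℂ ![f₁₂, f₂₂])
    (hnot : f₂₁ ∉ Submodule.span ℂ ({f₁₂, f₂₂} : Set ((Fin 3 → ℂ) →ₗ[ℂ] ℂ))) :
    -- (1) exactly one developable direction
    (∀ l m : ℂ, (l, m) ≠ ((0 : ℂ), (0 : ℂ)) →
      (¬ LinearIndependent ℂ ![l • f₁₁ + m • f₂₁, l • f₁₂ + m • f₂₂] ↔ m = -a * l)) ∧
    -- (2) the focal conic is a pair of distinct lines
    ((∀ x : Fin 3 → ℂ,
        f₁₁ x * f₂₂ x - f₁₂ x * f₂₁ x = f₂₁ x * (a * f₂₂ x - f₁₂ x)) ∧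
      LinearIndependent ℂ ![f₂₁, a • f₂₂ - f₁₂]) ∧
    -- (3) for every other direction, the focal locus is a single point
    (∀ l m : ℂ, (l, m) ≠ ((0 : ℂ), (0 : ℂ)) → m ≠ -a * l →
      LinearIndependent ℂ ![l • f₁₁ + m • f₂₁, l • f₁₂ + m • f₂₂] ∧
      Module.finrank ℂ
        ((LinearMap.ker f₂₁ ⊓ LinearMap.ker (l • f₁₂ + m • f₂₂)) :
          Submodule ℂ (Fin 3 → ℂ)) = 1) := by
  set P := span ℂ ({f₁₂, f₂₂} : Set ((Fin 3 → ℂ) →ₗ[ℂ] ℂ))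
  have hmem : ∀ l m : ℂ, l • f₁₂ + m • f₂₂ ∈ P := fun l m =>
    add_mem (smul_mem _ l (subset_span (by simp))) (smul_mem _ m (subset_span (by simp)))
  have hfirst : ∀ l m : ℂ, l • f₁₁ + m • f₂₁ = (a * l + m) • f₂₁ := fun l m => by
    rw [hf₁₁]; module
  have hdir : ∀ l m : ℂ, (l, m) ≠ (0, 0) → m ≠ -a * l →
      LinearIndependent ℂ ![l • f₁₁ + m • f₂₁, l • f₁₂ + m • f₂₂] := fun l m hlm hm => by
    rw [hfirst]
    refine linearIndependent_pair_of_notMem_of_mem ?_ (hmem l m) (hind.smul_add_smul_ne_zero hlm)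
    rwa [smul_mem_iff _ fun h => hm (by linear_combination h)]
  refine ⟨fun l m hlm => ⟨fun hdep => by_contra fun hm => hdep (hdir l m hlm hm), fun hm hli => ?_⟩, ⟨fun x => ?_, ?_⟩,
    fun l m hlm hm => ⟨hdir l m hlm hm, ?_⟩⟩
  · exact hli.ne_zero 0 (by rw [Matrix.cons_val_zero, hfirst, hm]; simp)
  · simp only [hf₁₁, LinearMap.smul_apply, smul_eq_mul]
    ring
  · have hline : a • f₂₂ - f₁₂ = (-1 : ℂ) • f₁₂ + a • f₂₂ := by module
    rw [hline]
    exact linearIndependent_pair_of_notMem_of_mem hnot (hmem _ _)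
      (hind.smul_add_smul_ne_zero (by simp))
  · have hrank := finrank_ker_inf_ker_add_two (linearIndependent_pair_of_notMem_of_mem hnot
      (hmem l m) (hind.smul_add_smul_ne_zero hlm))
    rw [Module.finrank_fin_fun] at hrank
    omega

/-- First case of §1.2 (α-congruences): when exactly one of the two pencils
degenerates (`f₁₁ = a • f₂₁` with `f₁₂, f₂₂` independent and
`f₂₁ ∉ span {f₁₂, f₂₂}`), there is exactly one developable direction, the focal
conic is a pair of distinct lines, and for every other direction the focal locus is
a single point. -/
theorem one_pencil_degenerates_alpha_case
    (f₁₂ f₂₁ f₂₂ : (Fin 3 → ℂ) →ₗ[ℂ] ℂ) (a : ℂ) (ha : a ≠ 0)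
    (f₁₁ : (Fin 3 → ℂ) →ₗ[ℂ] ℂ) (hf₁₁ : f₁₁ = a • f₂₁)
    (hind : LinearIndependent ℂ ![f₁₂, f₂₂])
    (hnot : f₂₁ ∉ Submodule.span ℂ ({f₁₂, f₂₂} : Set ((Fin 3 → ℂ) →ₗ[ℂ] ℂ))) :
    -- (1) exactly one developable direction
    (∀ l m : ℂ, (l, m) ≠ ((0 : ℂ), (0 : ℂ)) →
      (¬ LinearIndependent ℂ ![l • f₁₁ + m • f₂₁, l • f₁₂ + m • f₂₂] ↔ m = -a * l)) ∧
    -- (2) the focal conic is a pair of distinct lines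
    ((∀ x : Fin 3 → ℂ,
        f₁₁ x * f₂₂ x - f₁₂ x * f₂₁ x = f₂₁ x * (a * f₂₂ x - f₁₂ x)) ∧
      LinearIndependent ℂ ![f₂₁, a • f₂₂ - f₁₂]) ∧
    -- (3) for every other direction, the focal locus is a single point
    (∀ l m : ℂ, (l, m) ≠ ((0 : ℂ), (0 : ℂ)) → m ≠ -a * l →
      LinearIndependent ℂ ![l • f₁₁ + m • f₂₁, l • f₁₂ + m • f₂₂] ∧
      Module.finrank ℂ
        ((LinearMap.ker f₂₁ ⊓ LinearMap.ker (l • f₁₂ + m • f₂₂)) :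
          Submodule ℂ (Fin 3 → ℂ)) = 1) :=
  one_pencil_degenerates_alpha_case_general f₁₂ f₂₁ f₂₂ a f₁₁ hf₁₁ hind hnot
end
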